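/- arXiv:math/9511209 — 7 statements merged into one kernel-verified Lean document; each statement's English description precedes it below -/
import Mathlib

section
/- Let G = ⟨z⟩ be a multiplicative cyclic group of order m = p_1^{a_1}···p_r^{a_r}, where p_1, ..., p_r are distinct primes and each a_i > 0, and for 1 ≤ i ≤ r let P_i be the unique subgroup of G of order p_i. Then ker φ = Σ_{i=1}^r ℤG·σ(P_i), i.e. the kernel of φ is the ideal of ℤG generated by σ(P_1), ..., σ(P_r). -/
/-!
A character that is nontrivial on a finite group `P` sums to zero over `P`, so every `σ(P)` lies
in `ker φ`. Conversely, let `J` be the ideal the `σ(P)` generate and let `p ∣ m` be prime. Modulo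
`J`, `z ^ k ≡ -∑_{0<t<p} z ^ (k + t m / p)`, and adding `t m / p` to `k` changes, among the leading
base-`q` digits of `k mod q ^ vq(m)` (`q ∣ m` prime), only the one for `q = p`. Applying this
relation whenever that digit is `p - 1` makes the sum of these digits drop, so `ℤG / J` is spanned
by the `z ^ k`, `k < m`, none of whose leading digits is maximal. By the Chinese remainder theorem
there are at most `∏ (p - 1) p ^ (vp(m) - 1) = φ(m)` such `k`. Since `ℤG / J` maps onto `ℤ[ζ]`,
which is free of rank `φ(m)`, and a surjective endomorphism of `ℤ ^ φ(m)` is injective, this map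
is injective, i.e. `ker φ = J`.
-/

noncomputable section

/-- `σ(H) = ∑_{h ∈ H} h` in the integral group ring, for a finite subset `H ⊆ G`. -/
def grpSum {G : Type*} [CommGroup G] (s : Set G) (hs : s.Finite) : MonoidAlgebra ℤ G :=
  ∑ h ∈ hs.toFinset, MonoidAlgebra.of ℤ G h

open Finset Module Submodule Subgroup MonoidAlgebra

def digit (p i k : ℕ) : ℕ := k / p ^ i % p

section Digit

variable {p : ℕ}

theorem digit_lt (hp : 0 < p) (i k : ℕ) : digit p i k < p := Nat.mod_lt _ hp

theorem digit_add_mul_pow (hp : 0 < p) (i k c : ℕ) :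
    digit p i (k + c * p ^ i) = (digit p i k + c) % p := by
  rw [digit, digit, Nat.add_mul_div_right _ _ (pow_pos hp i), Nat.mod_add_mod]

theorem digit_eq_mod_div (p i k : ℕ) : digit p i k = k % p ^ (i + 1) / p ^ i := by
  rw [digit, pow_succ, Nat.mod_mul_right_div_self]

theorem digit_mod_of_pow_succ_dvd {i n : ℕ} (h : p ^ (i + 1) ∣ n) (k : ℕ) :
    digit p i (k % n) = digit p i k := by
  rw [digit_eq_mod_div, digit_eq_mod_div, Nat.mod_mod_of_dvd _ h]

theorem digit_add_of_pow_succ_dvd (hp : 0 < p) {i c : ℕ} (h : p ^ (i + 1) ∣ c) (k : ℕ) :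
    digit p i (k + c) = digit p i k := by
  obtain ⟨c, rfl⟩ := h
  rw [pow_succ, mul_assoc, mul_comm, digit_add_mul_pow hp, Nat.add_mul_mod_self_left,
    Nat.mod_eq_of_lt (digit_lt hp i k)]

theorem digit_add_mul_pow_ne (hp : 0 < p) {c : ℕ} (hc : ¬p ∣ c) (i k : ℕ) :
    digit p i (k + c * p ^ i) ≠ digit p i k := by
  rw [digit_add_mul_pow hp]
  intro h
  have : digit p i k + c ≡ digit p i k + 0 [MOD p] :=
    h.trans (Nat.mod_eq_of_lt (digit_lt hp i k)).symm
  exact hc (Nat.modEq_zero_iff_dvd.mp (this.add_left_cancel' _))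

theorem mod_pow_succ_lt_of_digit_lt (hp : 0 < p) {i k : ℕ} (h : digit p i k < p - 1) :
    k % p ^ (i + 1) < (p - 1) * p ^ i := by
  rwa [digit_eq_mod_div, Nat.div_lt_iff_lt_mul (pow_pos hp i)] at h

end Digit

-- the leading base-`p` digit of `k mod p ^ vₚ(m)`
def topDigit (m p k : ℕ) : ℕ := digit p (m.factorization p - 1) k

def IsBasisExponent (m k : ℕ) : Prop := ∀ p ∈ m.primeFactors, topDigit m p k ≠ p - 1

instance (m : ℕ) : DecidablePred (IsBasisExponent m) := fun _ => by
  unfold IsBasisExponent; infer_instance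

def topDigitSum (m k : ℕ) : ℕ := ∑ p ∈ m.primeFactors, topDigit m p k

section TopDigit

variable {m p : ℕ}

theorem factorization_sub_one_add_one (hp : p ∈ m.primeFactors) :
    m.factorization p - 1 + 1 = m.factorization p :=
  Nat.sub_add_cancel <| Nat.pos_of_ne_zero <| by
    rwa [← Finsupp.mem_support_iff, Nat.support_factorization]

theorem topDigit_mod_self (hp : p ∈ m.primeFactors) (k : ℕ) :
    topDigit m p (k % m) = topDigit m p k :=
  digit_mod_of_pow_succ_dvd (by rw [factorization_sub_one_add_one hp]; exact Nat.ordProj_dvd m p) k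

theorem isBasisExponent_mod_self_iff {k : ℕ} :
    IsBasisExponent m (k % m) ↔ IsBasisExponent m k :=
  forall₂_congr fun _ hp => by rw [topDigit_mod_self hp]

theorem topDigit_add_mul_div_of_ne {q : ℕ} (hp : p ∈ m.primeFactors) (hq : q ∈ m.primeFactors)
    (hqp : q ≠ p) (k t : ℕ) : topDigit m q (k + t * (m / p)) = topDigit m q k := by
  have hq' := Nat.prime_of_mem_primeFactors hq
  have hp' := Nat.prime_of_mem_primeFactors hp
  have hdvd : q ^ m.factorization q ∣ m / p := by
    refine Nat.Coprime.dvd_of_dvd_mul_left (((Nat.coprime_primes hq' hp').2 hqp).pow_left _) ?_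
    rw [Nat.mul_div_cancel' (Nat.dvd_of_mem_primeFactors hp)]
    exact Nat.ordProj_dvd m q
  rw [← factorization_sub_one_add_one hq] at hdvd
  exact digit_add_of_pow_succ_dvd hq'.pos (hdvd.mul_left t) k

theorem topDigit_add_mul_div_self_ne (hp : p ∈ m.primeFactors) {t : ℕ} (ht : 0 < t)
    (htp : t < p) (k : ℕ) : topDigit m p (k + t * (m / p)) ≠ topDigit m p k := by
  have hp' := Nat.prime_of_mem_primeFactors hp
  have hm : m ≠ 0 := (Nat.mem_primeFactors.1 hp).2.2
  have hdiv : m / p = m / p ^ m.factorization p * p ^ (m.factorization p - 1) := by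
    refine Nat.div_eq_of_eq_mul_left hp'.pos ?_
    calc m = p ^ (m.factorization p - 1 + 1) * (m / p ^ m.factorization p) := by
          rw [factorization_sub_one_add_one hp, Nat.ordProj_mul_ordCompl_eq_self]
      _ = _ := by ring
  have hndvd : ¬p ∣ t * (m / p ^ m.factorization p) := fun h =>
    (hp'.dvd_mul.1 h).elim (Nat.not_dvd_of_pos_of_lt ht htp) (Nat.not_dvd_ordCompl hp' hm)
  rw [hdiv, ← mul_assoc]
  exact digit_add_mul_pow_ne hp'.pos hndvd _ k

theorem topDigitSum_add_mul_div_lt (hp : p ∈ m.primeFactors) {k : ℕ}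
    (hk : topDigit m p k = p - 1) {t : ℕ} (ht : 0 < t) (htp : t < p) :
    topDigitSum m (k + t * (m / p)) < topDigitSum m k := by
  refine sum_lt_sum (fun q hq => ?_) ⟨p, hp, ?_⟩
  · rcases eq_or_ne q p with rfl | hqp
    · exact hk ▸ Nat.le_sub_one_of_lt (digit_lt (Nat.prime_of_mem_primeFactors hq).pos _ _)
    · exact (topDigit_add_mul_div_of_ne hp hq hqp k t).le
  · exact hk ▸ lt_of_le_of_ne
      (Nat.le_sub_one_of_lt (digit_lt (Nat.prime_of_mem_primeFactors hp).pos _ _))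
      (hk ▸ topDigit_add_mul_div_self_ne hp ht htp k)

end TopDigit

theorem Nat.modEq_of_forall_modEq_ordProj {m a b : ℕ} (hm : m ≠ 0)
    (h : ∀ p ∈ m.primeFactors, a ≡ b [MOD p ^ m.factorization p]) : a ≡ b [MOD m] := by
  simp only [Nat.modEq_iff_dvd] at h ⊢
  conv_lhs => rw [← Nat.prod_factorization_pow_eq_self hm]
  rw [Finsupp.prod, Nat.support_factorization, Nat.cast_prod]
  refine prod_dvd_of_coprime (fun p hp q hq hpq => ?_) h
  exact Nat.isCoprime_iff_coprime.2 (Nat.Coprime.pow _ _ ((Nat.coprime_primes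
    (Nat.prime_of_mem_primeFactors hp) (Nat.prime_of_mem_primeFactors hq)).2 hpq))

theorem card_isBasisExponent_le_totient {m : ℕ} (hm : m ≠ 0) :
    #{k ∈ range m | IsBasisExponent m k} ≤ m.totient := by
  classical
  let bound (p : ℕ) := (p - 1) * p ^ (m.factorization p - 1)
  calc #{k ∈ range m | IsBasisExponent m k}
      ≤ #(Fintype.piFinset fun p : m.primeFactors => range (bound p)) := by
        refine card_le_card_of_injOn (fun k p => k % p ^ m.factorization p) ?_ ?_
        · intro k hk
          rw [mem_coe, mem_filter, mem_range] at hk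
          rw [mem_coe, Fintype.mem_piFinset]
          intro ⟨p, hp⟩
          have hp0 := (Nat.prime_of_mem_primeFactors hp).pos
          have := mod_pow_succ_lt_of_digit_lt hp0 <|
            lt_of_le_of_ne (Nat.le_sub_one_of_lt (digit_lt hp0 _ _)) (hk.2 p hp)
          rwa [factorization_sub_one_add_one hp, ← mem_range] at this
        · intro k hk k' hk' hkk'
          rw [mem_coe, mem_filter, mem_range] at hk hk'
          refine (Nat.modEq_of_forall_modEq_ordProj hm fun p hp => ?_).eq_of_lt_of_lt hk.1 hk'.1
          exact congrFun hkk' ⟨p, hp⟩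
    _ = ∏ p ∈ m.primeFactors, bound p := by
        rw [Fintype.card_piFinset, prod_coe_sort m.primeFactors fun p => #(range (bound p))]
        simp only [card_range]
    _ = m.totient := by
        rw [Nat.totient_eq_prod_factorization hm, Finsupp.prod, Nat.support_factorization]
        exact prod_congr rfl fun _ _ => mul_comm _ _

theorem mem_span_image_isBasisExponent {R M : Type*} [Ring R] [AddCommGroup M] [Module R M]
    {m : ℕ} (hm : 0 < m) (x : ℕ → M) (hper : ∀ k, x (k % m) = x k)
    (horbit : ∀ p ∈ m.primeFactors, ∀ k, ∑ t ∈ range p, x (k + t * (m / p)) = 0)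
    (k : ℕ) :
    x k ∈ Submodule.span R (x '' {k ∈ range m | IsBasisExponent m k}) := by
  induction hn : topDigitSum m k using Nat.strong_induction_on generalizing k with
  | _ n ih =>
  by_cases hk : IsBasisExponent m k
  · rw [← hper]
    refine Submodule.subset_span ⟨k % m, ?_, rfl⟩
    simpa [Nat.mod_lt _ hm] using isBasisExponent_mod_self_iff.2 hk
  · obtain ⟨p, hp, hdigit⟩ : ∃ p ∈ m.primeFactors, topDigit m p k = p - 1 := by
      simpa only [IsBasisExponent, not_forall, not_not, exists_prop] using hk
    obtain ⟨q, rfl⟩ : ∃ q, p = q + 1 :=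
      ⟨p - 1, (Nat.sub_add_cancel (Nat.prime_of_mem_primeFactors hp).one_le).symm⟩
    have hrel := horbit _ hp k
    rw [sum_range_succ', zero_mul, add_zero, add_eq_zero_iff_neg_eq', neg_eq_iff_eq_neg] at hrel
    rw [hrel]
    refine neg_mem (Submodule.sum_mem _ fun t ht => ih _ ?_ _ rfl)
    exact hn ▸ topDigitSum_add_mul_div_lt hp hdigit t.succ_pos
      (Nat.succ_lt_succ (mem_range.1 ht))

theorem LinearMap.injective_of_surjective_of_card_le_finrank {R M N : Type*} [CommRing R]
    [Nontrivial R] [AddCommGroup M] [Module R M] [AddCommGroup N] [Module R N] [Module.Free R N]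
    [Module.Finite R N] (f : M →ₗ[R] N) (hf : Function.Surjective f) {s : Finset M}
    (hs : span R (s : Set M) = ⊤) (hcard : #s ≤ finrank R N) : Function.Injective f := by
  let v : s → M := Subtype.val
  have hv : span R (Set.range v) = ⊤ := by rwa [Subtype.range_coe]
  have hfv : span R (Set.range (f ∘ v)) = ⊤ := by
    rw [Set.range_comp, ← Submodule.map_span, hv, Submodule.map_top, LinearMap.range_eq_top.2 hf]
  have hrank : finrank R N = Fintype.card s :=
    le_antisymm (finrank_le_of_span_eq_top hfv) (by simpa using hcard)
  let b := (Module.finBasisOfFinrankEq R N hrank).reindex (Fintype.equivFin s).symm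
  let lc := Fintype.linearCombination R v
  have hlc : Function.Surjective lc := by
    rw [← LinearMap.range_eq_top, Fintype.range_linearCombination, hv]
  have hinj := OrzechProperty.injective_of_surjective_endomorphism
    (b.equivFun.toLinearMap ∘ₗ f ∘ₗ lc) (b.equivFun.surjective.comp (hf.comp hlc))
  refine (injective_iff_map_eq_zero f).2 fun x hx => ?_
  obtain ⟨c, rfl⟩ := hlc x
  rw [show c = 0 from hinj (by simp [hx]), map_zero]

theorem grpSum_zpowers {G : Type*} [CommGroup G] [Finite G] (g : G)
    (hs : (zpowers g : Set G).Finite) :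
    grpSum (zpowers g) hs = ∑ t ∈ range (orderOf g), of ℤ G (g ^ t) := by
  classical
  have hfin : hs.toFinset = (range (orderOf g)).image (g ^ ·) := by
    rw [← coe_inj, Set.Finite.coe_toFinset,
      ← (isOfFinOrder_of_finite g).powers_eq_image_range_orderOf,
      (isOfFinOrder_of_finite g).powers_eq_zpowers]
  rw [grpSum, hfin, sum_image fun i hi j hj =>
    pow_injOn_Iio_orderOf (by simpa using hi) (by simpa using hj)]

theorem map_grpSum_eq_zero {G K : Type*} [CommGroup G] [CommRing K] [IsDomain K]
    (φ : MonoidAlgebra ℤ G →+* K) (hφ : Function.Injective fun g => φ (of ℤ G g))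
    (P : Subgroup G) (hs : (P : Set G).Finite) (hP : P ≠ ⊥) : φ (grpSum P hs) = 0 := by
  have := hs.fintype
  let χ : P →* K := (φ.toMonoidHom.comp (of ℤ G)).comp P.subtype
  have hχ : χ ≠ 1 := by
    obtain ⟨g, hg⟩ := Subgroup.ne_bot_iff_exists_ne_one.1 hP
    refine fun h => hg (Subtype.ext (hφ ?_))
    simpa [χ, ← MonoidAlgebra.one_def] using DFunLike.congr_fun h g
  rw [grpSum, map_sum, sum_subtype hs.toFinset (p := (· ∈ P)) (by simp)]
  exact sum_hom_units_eq_zero χ hχ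

theorem MonoidHom.injective_of_isPrimitiveRoot {G M : Type*} [Group G] [Finite G] [CommMonoid M]
    (χ : G →* M) {z : G} (hz : ∀ g, g ∈ zpowers z)
    (hχ : IsPrimitiveRoot (χ z) (orderOf z)) :
    Function.Injective χ := by
  refine (injective_iff_map_eq_one χ).2 fun g hg => ?_
  obtain ⟨k, rfl⟩ := mem_powers_iff_mem_zpowers.2 (hz g)
  rw [map_pow] at hg
  exact orderOf_dvd_iff_pow_eq_one.1 (hχ.dvd_of_pow_eq_one k hg)

theorem of_pow_mul_grpSum_zpowers_pow {G : Type*} [CommGroup G] [Finite G] (g : G) (k n : ℕ) :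
    of ℤ G (g ^ k) * grpSum (zpowers (g ^ n)) (Set.toFinite _) =
      ∑ t ∈ range (orderOf (g ^ n)), of ℤ G (g ^ (k + t * n)) := by
  rw [grpSum_zpowers, mul_sum]
  refine sum_congr rfl fun t _ => ?_
  rw [← map_mul, ← pow_mul, ← pow_add, mul_comm n]

theorem range_toIntAlgHom_eq_adjoin {G A : Type*} [CommGroup G] [Finite G] [Ring A]
    (φ : MonoidAlgebra ℤ G →+* A) {z : G} (hz : ∀ g, g ∈ zpowers z) :
    φ.toIntAlgHom.range = Algebra.adjoin ℤ {φ (of ℤ G z)} := by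
  refine le_antisymm ?_ (Algebra.adjoin_le (Set.singleton_subset_iff.2 ⟨of ℤ G z, rfl⟩))
  rintro _ ⟨y, rfl⟩
  induction y using MonoidAlgebra.induction_on with
  | of g =>
    obtain ⟨k, rfl⟩ := mem_powers_iff_mem_zpowers.2 (hz g)
    change φ (of ℤ G (z ^ k)) ∈ _
    rw [map_pow, map_pow]
    exact pow_mem (Algebra.self_mem_adjoin_singleton ℤ _) k
  | add f g hf hg => rw [map_add]; exact add_mem hf hg
  | smul r f hf => rw [map_zsmul]; exact zsmul_mem hf r

theorem IsPrimitiveRoot.adjoin_powerBasis'_dim {K : Type*} [Field K] [CharZero K] {ζ : K} {m : ℕ}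
    (hζ : IsPrimitiveRoot ζ m) (hm : 0 < m) :
    (Algebra.adjoin.powerBasis' (hζ.isIntegral hm)).dim = m.totient := by
  rw [Algebra.adjoin.powerBasis'_dim, ← Polynomial.cyclotomic_eq_minpoly hζ hm,
    Polynomial.natDegree_cyclotomic]

theorem span_mkQ_of_pow_isBasisExponent_eq_top {G : Type*} [CommGroup G] [Finite G] {z : G}
    (hz : ∀ g, g ∈ zpowers z) (I : Ideal (MonoidAlgebra ℤ G))
    (hI : ∀ P : Subgroup G, (Nat.card P).Prime → grpSum P (Set.toFinite _) ∈ I) :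
    span ℤ ((fun k => (I.restrictScalars ℤ).mkQ (of ℤ G (z ^ k))) ''
      {k ∈ range (orderOf z) | IsBasisExponent (orderOf z) k}) = ⊤ := by
  have hm : 0 < orderOf z := orderOf_pos z
  rw [eq_top_iff]
  rintro y -
  obtain ⟨y, rfl⟩ := (I.restrictScalars ℤ).mkQ_surjective y
  induction y using MonoidAlgebra.induction_on with
  | of g =>
    obtain ⟨k, rfl⟩ := mem_powers_iff_mem_zpowers.2 (hz g)
    refine mem_span_image_isBasisExponent hm _ (fun k => by simp only [pow_mod_orderOf]) ?_ k
    intro p hp k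
    have hord : orderOf (z ^ (orderOf z / p)) = p :=
      orderOf_pow_orderOf_div hm.ne' (Nat.dvd_of_mem_primeFactors hp)
    have hmem := I.mul_mem_left (of ℤ G (z ^ k))
      (hI _ (by rw [Nat.card_zpowers, hord]; exact Nat.prime_of_mem_primeFactors hp))
    rw [of_pow_mul_grpSum_zpowers_pow, hord] at hmem
    rw [← map_sum]
    exact (Quotient.mk_eq_zero _).2 hmem
  | add f g hf hg => rw [map_add]; exact add_mem hf hg
  | smul r f hf => rw [map_smul]; exact smul_mem _ r hf

theorem ker_le_of_grpSum_mem {G K : Type*} [CommGroup G] [Finite G] [Field K] [CharZero K]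
    {z : G} (hz : ∀ g, g ∈ zpowers z) (φ : MonoidAlgebra ℤ G →+* K)
    (hφ : IsPrimitiveRoot (φ (of ℤ G z)) (orderOf z)) (I : Ideal (MonoidAlgebra ℤ G))
    (hIφ : I ≤ RingHom.ker φ)
    (hI : ∀ P : Subgroup G, (Nat.card P).Prime → grpSum P (Set.toFinite _) ∈ I) :
    RingHom.ker φ ≤ I := by
  classical
  have hm : 0 < orderOf z := orderOf_pos z
  let N := I.restrictScalars ℤ
  let ψ := φ.toIntAlgHom.rangeRestrict
  have hNψ : N ≤ LinearMap.ker ψ.toLinearMap := fun y hy => Subtype.ext (hIφ hy)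
  have hsurj : Function.Surjective (N.liftQ ψ.toLinearMap hNψ) := by
    rw [← LinearMap.range_eq_top, range_liftQ, LinearMap.range_eq_top]
    exact φ.toIntAlgHom.rangeRestrict_surjective
  let pb := Algebra.adjoin.powerBasis' (hφ.isIntegral hm)
  let e := (Subalgebra.equivOfEq _ _ (range_toIntAlgHom_eq_adjoin φ hz)).symm.toLinearEquiv
  have := Module.Free.of_basis pb.basis
  have := Module.Finite.of_basis pb.basis
  have := Module.Free.of_equiv e
  have := Module.Finite.equiv e
  have hrank : finrank ℤ φ.toIntAlgHom.range = (orderOf z).totient := by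
    rw [← e.finrank_eq, pb.finrank, hφ.adjoin_powerBasis'_dim hm]
  have hinj := (N.liftQ ψ.toLinearMap hNψ).injective_of_surjective_of_card_le_finrank hsurj
    (s := {k ∈ range (orderOf z) | IsBasisExponent (orderOf z) k}.image
      fun k => N.mkQ (of ℤ G (z ^ k)))
    (by rw [coe_image, coe_filter]; exact span_mkQ_of_pow_isBasisExponent_eq_top hz I hI)
    (hrank ▸ card_image_le.trans (card_isBasisExponent_le_totient hm.ne'))
  intro y hy
  exact (Quotient.mk_eq_zero N).1 (hinj (by rw [map_zero]; exact Subtype.ext hy))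

theorem ker_eq_span_of_prime_order_subgroup_sums_general
    (m : ℕ)
    (G : Type) [CommGroup G] [Fintype G] (hcard : Fintype.card G = m)
    (z : G) (hz : ∀ g : G, g ∈ Subgroup.zpowers z)
    (ζ : ℂ) (hζ : IsPrimitiveRoot ζ m)
    (φ : MonoidAlgebra ℤ G →+* ℂ) (hφ : φ (MonoidAlgebra.of ℤ G z) = ζ) :
    RingHom.ker φ =
      Ideal.span {x : MonoidAlgebra ℤ G |
        ∃ P : Subgroup G, (Nat.card P).Prime ∧
          x = grpSum (P : Set G) (Set.toFinite _)} := by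
  have hprim : IsPrimitiveRoot (φ (of ℤ G z)) (orderOf z) := by
    rwa [hφ, orderOf_eq_card_of_forall_mem_zpowers hz, Nat.card_eq_fintype_card, hcard]
  have hinj : Function.Injective fun g => φ (of ℤ G g) :=
    (φ.toMonoidHom.comp (of ℤ G)).injective_of_isPrimitiveRoot hz hprim
  have hle : Ideal.span {x : MonoidAlgebra ℤ G | ∃ P : Subgroup G, (Nat.card P).Prime ∧
      x = grpSum (P : Set G) (Set.toFinite _)} ≤ RingHom.ker φ := by
    refine Ideal.span_le.2 ?_
    rintro _ ⟨P, hP, rfl⟩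
    exact map_grpSum_eq_zero φ hinj P _ fun h => hP.one_lt.ne' ((Subgroup.eq_bot_iff_card P).1 h)
  exact le_antisymm (ker_le_of_grpSum_mem hz φ hprim _ hle fun P hP =>
    Ideal.subset_span ⟨P, hP, rfl⟩) hle

/-- Theorem 2.2 (Rédei, de Bruijn, Schoenberg): with `G = ⟨z⟩` cyclic of order `m`,
`ζ` a primitive `m`-th root of unity, and `φ : ℤG → ℂ` the ring homomorphism with
`φ(z) = ζ`, the kernel of `φ` is the ideal of `ℤG` generated by the elements
`σ(P)` for `P` ranging over the subgroups of `G` of prime order (these are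
exactly the unique subgroups `P_i` of order `p_i`, for the distinct primes
`p_1, …, p_r` dividing `m`). -/
theorem ker_eq_span_of_prime_order_subgroup_sums
    (m : ℕ) (hm : 0 < m)
    (G : Type) [CommGroup G] [Fintype G] (hcard : Fintype.card G = m)
    (z : G) (hz : ∀ g : G, g ∈ Subgroup.zpowers z)
    (ζ : ℂ) (hζ : IsPrimitiveRoot ζ m)
    (φ : MonoidAlgebra ℤ G →+* ℂ) (hφ : φ (MonoidAlgebra.of ℤ G z) = ζ) :
    RingHom.ker φ =
      Ideal.span {x : MonoidAlgebra ℤ G |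
        ∃ P : Subgroup G, (Nat.card P).Prime ∧
          x = grpSum (P : Set G) (Set.toFinite _)} :=
  ker_eq_span_of_prime_order_subgroup_sums_general m G hcard z hz ζ hζ φ hφ

end
end

section
/- Let G = ⟨z⟩ be a multiplicative cyclic group of order m = p_1^{a_1}···p_r^{a_r}, where p_1, ..., p_r are distinct primes and each a_i > 0. Let G_0 ⊆ G be the unique subgroup of order p_1·p_2···p_r, and let g_1, ..., g_s (s = [G : G_0]) be a complete set of coset representatives of G_0 in G. Then ℕG ∩ ker φ = Σ_{j=1}^s g_j·(ℕG_0 ∩ ker φ), where ℕG_0 ∩ ker φ is viewed inside ℤG via the inclusion ℤG_0 ⊆ ℤG. -/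
/-!
Write `m = s * n₀` with `n₀ = p₁ ⋯ p_r`. Every prime factor of `s` divides `n₀`, so
`totient m = s * totient n₀`, i.e. `[ℚ(ζ) : ℚ(ζ^s)] = s`, and `1, ζ, …, ζ^(s-1)` are
linearly independent over `ℚ(ζ^s)`. As `G₀` is the subgroup of `n₀`-torsion, `φ(ℤG₀) ⊆ ℚ(ζ^s)`,
while the images of the coset representatives are `ζ^a` with pairwise distinct `a mod s`; up to
units of `ℚ(ζ^s)` they are distinct elements of `1, ζ, …, ζ^(s-1)`, hence linearly independent.
Now split `x ∈ ℕG ∩ ker φ` along the cosets, `x = ∑ⱼ gⱼ yⱼ` with `yⱼ ∈ ℕG₀`: the relation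
`0 = φ(x) = ∑ⱼ φ(gⱼ) φ(yⱼ)` with coefficients `φ(yⱼ) ∈ ℚ(ζ^s)` forces `φ(yⱼ) = 0` for all `j`.
-/

open Polynomial IntermediateField Module

theorem Nat.totient_eq_div_mul_totient_prod_primeFactors (n : ℕ) :
    n.totient = n / (∏ p ∈ n.primeFactors, p) * (∏ p ∈ n.primeFactors, p).totient := by
  have hprime : ∀ p ∈ n.primeFactors, p.Prime := fun p hp => Nat.prime_of_mem_primeFactors hp
  rw [Nat.totient_eq_div_primeFactors_mul (∏ p ∈ n.primeFactors, p), Nat.primeFactors_prod hprime,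
    Nat.div_self (Finset.prod_pos fun p hp => (hprime p hp).pos), one_mul,
    Nat.totient_eq_div_primeFactors_mul n]

theorem Subgroup.mem_iff_pow_natCard_eq_one {G : Type*} [CommGroup G] [IsCyclic G] [Finite G]
    (H : Subgroup G) {g : G} : g ∈ H ↔ g ^ Nat.card H = 1 := by
  suffices H = (powMonoidHom (Nat.card H) : G →* G).ker by
    conv_lhs => rw [this]
    rfl
  refine Subgroup.eq_of_le_of_card_ge (fun h hh => ?_) ?_
  · have h1 : (⟨h, hh⟩ : H) ^ Nat.card H = 1 := pow_card_eq_one'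
    rw [MonoidHom.mem_ker, powMonoidHom_apply]
    exact congrArg Subtype.val h1
  · rw [IsCyclic.card_powMonoidHom_ker, Nat.gcd_eq_right H.card_subgroup_dvd_card]

theorem MonoidHom.injective_of_orderOf_map_eq {G M : Type*} [Group G] [Finite G] [Monoid M]
    (χ : G →* M) {z : G} (hz : ∀ g, g ∈ Subgroup.zpowers z) (hχz : orderOf (χ z) = orderOf z) :
    Function.Injective χ := by
  refine (injective_iff_map_eq_one χ).mpr fun g hg => ?_
  obtain ⟨k, rfl⟩ := mem_powers_iff_mem_zpowers.mpr (hz g)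
  rw [map_pow, ← orderOf_dvd_iff_pow_eq_one, hχz] at hg
  exact orderOf_dvd_iff_pow_eq_one.mp hg

theorem LinearIndependent.eq_zero_of_sum_mul_eq_zero {F L ι : Type*} [Field F] [Field L]
    [Algebra F L] {K : IntermediateField F L} {T : Finset ι} {v w : ι → L}
    (hv : LinearIndependent K fun t : T => v t) (hw : ∀ t ∈ T, w t ∈ K)
    (hsum : ∑ t ∈ T, v t * w t = 0) : ∀ t ∈ T, w t = 0 := by
  intro t ht
  have := Fintype.linearIndependent_iff.mp hv (fun i => ⟨w i, hw i i.2⟩)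
    (by rw [← hsum, ← Finset.sum_coe_sort T]; exact Finset.sum_congr rfl fun i _ => mul_comm _ _)
    ⟨t, ht⟩
  simpa using congrArg Subtype.val this

namespace IsPrimitiveRoot

variable {L : Type*} [Field L] {ζ : L}

theorem mem_adjoin_simple_of_pow_eq_one {F : Type*} [Field F] [Algebra F L] {n : ℕ} [NeZero n]
    (hζ : IsPrimitiveRoot ζ n) {ξ : L} (hξ : ξ ^ n = 1) : ξ ∈ F⟮ζ⟯ := by
  obtain ⟨i, -, rfl⟩ := hζ.eq_pow_of_pow_eq_one hξ
  exact pow_mem (mem_adjoin_simple_self F ζ) i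

variable [CharZero L] {s n : ℕ}

theorem natDegree_minpoly_adjoin_pow (hζ : IsPrimitiveRoot ζ (s * n)) (hsn : 0 < s * n)
    (htot : (s * n).totient = s * n.totient) :
    (minpoly ℚ⟮ζ ^ s⟯ ζ).natDegree = s := by
  set K := ℚ⟮ζ ^ s⟯
  have hn : 0 < n := Nat.pos_of_mul_pos_left hsn
  have hint : IsIntegral ℚ ζ := (hζ.isIntegral hsn).tower_top
  have hint' : IsIntegral K ζ := hint.tower_top
  have hK : finrank ℚ K = n.totient := by
    rw [adjoin.finrank (hint.pow s), ← cyclotomic_eq_minpoly_rat (hζ.pow hsn rfl) hn,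
      natDegree_cyclotomic]
  have hL : finrank ℚ ℚ⟮ζ⟯ = (s * n).totient := by
    rw [adjoin.finrank hint, ← cyclotomic_eq_minpoly_rat hζ hsn, natDegree_cyclotomic]
  have hKL : (K⟮ζ⟯).restrictScalars ℚ = ℚ⟮ζ⟯ :=
    (restrictScalars_adjoin_eq_sup (K := K) (S := {ζ})).trans <| sup_eq_right.mpr <|
      adjoin_simple_le_iff.mpr (pow_mem (mem_adjoin_simple_self ℚ ζ) s)
  have : FiniteDimensional ℚ K := adjoin.finiteDimensional (hint.pow s)
  have : Module.Free K K⟮ζ⟯ := Module.Free.of_divisionRing _ _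
  have htower : finrank ℚ K * finrank K K⟮ζ⟯ = finrank ℚ ℚ⟮ζ⟯ := by
    rw [finrank_mul_finrank ℚ K K⟮ζ⟯, ← hKL]
    rfl
  rw [hK, hL, htot, mul_comm s] at htower
  rw [← adjoin.finrank hint']
  exact Nat.eq_of_mul_eq_mul_left (Nat.totient_pos.mpr hn) htower

theorem linearIndependent_pow_adjoin_pow (hζ : IsPrimitiveRoot ζ (s * n)) (hsn : 0 < s * n)
    (htot : (s * n).totient = s * n.totient) :
    LinearIndependent ℚ⟮ζ ^ s⟯ fun j : Fin s => ζ ^ (j : ℕ) :=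
  (linearIndependent_pow ζ).comp (Fin.cast (hζ.natDegree_minpoly_adjoin_pow hsn htot).symm)
    (Fin.cast_injective _)

theorem linearIndependent_of_pow_injective (hζ : IsPrimitiveRoot ζ (s * n)) (hsn : 0 < s * n)
    (htot : (s * n).totient = s * n.totient) {ι : Type*} {ξ : ι → L}
    (hξ : ∀ i, ξ i ^ (s * n) = 1) (hinj : Function.Injective fun i => ξ i ^ n) :
    LinearIndependent ℚ⟮ζ ^ s⟯ ξ := by
  have hs : 0 < s := Nat.pos_of_mul_pos_right hsn
  have : NeZero (s * n) := ⟨hsn.ne'⟩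
  -- `ξ i = ζ ^ a = (ζ ^ s) ^ (a / s) * ζ ^ (a % s)`, a unit of `ℚ(ζ^s)` times a power `ζ ^ j`, `j < s`
  choose a _ ha using fun i => hζ.eq_pow_of_pow_eq_one (hξ i)
  let r : ι → Fin s := fun i => ⟨a i % s, Nat.mod_lt _ hs⟩
  let u : ι → ℚ⟮ζ ^ s⟯ˣ := fun i =>
    Units.mk0 ⟨(ζ ^ s) ^ (a i / s), pow_mem (mem_adjoin_simple_self ℚ _) _⟩
      fun h => pow_ne_zero _ (pow_ne_zero _ (hζ.ne_zero hsn.ne')) (congrArg Subtype.val h)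
  have hξ_eq : ξ = u • fun i => ζ ^ (r i : ℕ) := by
    funext i
    change ξ i = (ζ ^ s) ^ (a i / s) * ζ ^ (a i % s)
    rw [← ha i, ← pow_mul, ← pow_add, Nat.div_add_mod]
  have hξ_pow : ∀ i, ξ i ^ n = ζ ^ (r i * n : ℕ) := by
    intro i
    rw [← ha i, ← pow_mul, (hζ.isOfFinOrder hsn.ne').pow_eq_pow_iff_modEq, ← hζ.eq_orderOf]
    exact ((Nat.mod_modEq (a i) s).mul_right' n).symm
  have hr : Function.Injective r := fun i j hij => hinj (by simp only [hξ_pow, hij])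
  rw [hξ_eq]
  exact ((hζ.linearIndependent_pow_adjoin_pow hsn htot).comp r hr).units_smul u

theorem linearIndependent_map_cosetReps (hζ : IsPrimitiveRoot ζ (s * n)) (hsn : 0 < s * n)
    (htot : (s * n).totient = s * n.totient) {G : Type*} [CommGroup G] [IsCyclic G] [Finite G]
    (hG : Nat.card G = s * n) {χ : G →* L} (hχ : Function.Injective χ) {H : Subgroup G}
    (hH : Nat.card H = n) {T : Finset G} (hT : ∀ g : G, ∃! t, t ∈ T ∧ g⁻¹ * t ∈ H) :
    LinearIndependent ℚ⟮ζ ^ s⟯ fun t : T => χ t := by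
  refine hζ.linearIndependent_of_pow_injective hsn htot (fun t => ?_) fun t t' htt' => ?_
  · rw [← map_pow, ← hG, pow_card_eq_one', map_one]
  · have hpow : (t : G) ^ n = t' ^ n := hχ (by simpa only [map_pow] using htt')
    have hcoset : (t : G)⁻¹ * t' ∈ H := by
      rw [H.mem_iff_pow_natCard_eq_one, hH, mul_pow, inv_pow, hpow, inv_mul_cancel]
    obtain ⟨_, _, huniq⟩ := hT t
    exact Subtype.ext ((huniq t ⟨t.2, by simp⟩).trans (huniq t' ⟨t'.2, hcoset⟩).symm)

end IsPrimitiveRoot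

namespace MonoidAlgebra

variable {R G : Type*} [Semiring R] [Group G]

noncomputable def cosetComponent (H : Subgroup G) (t : G) (x : MonoidAlgebra R G) :
    MonoidAlgebra R G :=
  open Classical in .ofCoeff ((of R G t⁻¹ * x).coeff.filter (· ∈ H))

theorem coeff_cosetComponent_of_mem {H : Subgroup G} (t : G) (x : MonoidAlgebra R G) {g : G}
    (hg : g ∈ H) : (cosetComponent H t x).coeff g = x.coeff (t * g) := by
  simp [cosetComponent, hg]

theorem coeff_cosetComponent_of_notMem {H : Subgroup G} (t : G) (x : MonoidAlgebra R G) {g : G}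
    (hg : g ∉ H) : (cosetComponent H t x).coeff g = 0 := by
  simp [cosetComponent, hg]

theorem coeff_cosetComponent_nonneg [Preorder R] {H : Subgroup G} (t : G)
    {x : MonoidAlgebra R G} (hx : ∀ g, 0 ≤ x.coeff g) (g : G) :
    0 ≤ (cosetComponent H t x).coeff g := by
  by_cases hg : g ∈ H
  · exact (coeff_cosetComponent_of_mem t x hg).symm ▸ hx _
  · exact (coeff_cosetComponent_of_notMem t x hg).ge

theorem sum_of_mul_cosetComponent {H : Subgroup G} {T : Finset G}
    (hT : ∀ g : G, ∃! t, t ∈ T ∧ g⁻¹ * t ∈ H) (x : MonoidAlgebra R G) :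
    ∑ t ∈ T, of R G t * cosetComponent H t x = x := by
  ext g
  obtain ⟨t₀, ⟨ht₀, hgt₀⟩, huniq⟩ := hT g
  have hmem : ∀ t, t⁻¹ * g ∈ H ↔ g⁻¹ * t ∈ H := fun t => by
    rw [← H.inv_mem_iff, mul_inv_rev, inv_inv]
  simp only [coeff_sum, Finsupp.finsetSum_apply, of_apply, coeff_single_mul_apply, one_mul]
  rw [Finset.sum_eq_single_of_mem t₀ ht₀ fun t ht hne => coeff_cosetComponent_of_notMem _ _
    fun h => hne (huniq t ⟨ht, (hmem t).mp h⟩),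
    coeff_cosetComponent_of_mem _ _ ((hmem t₀).mpr hgt₀), mul_inv_cancel_left]

theorem coeff_sum_of_mul_nonneg [PartialOrder R] [IsOrderedAddMonoid R] {T : Finset G}
    {y : G → MonoidAlgebra R G} (hy : ∀ t ∈ T, ∀ g, 0 ≤ (y t).coeff g) (g : G) :
    0 ≤ (∑ t ∈ T, of R G t * y t).coeff g := by
  rw [coeff_sum, Finsupp.finsetSum_apply]
  refine Finset.sum_nonneg fun t ht => ?_
  rw [of_apply, coeff_single_mul_apply, one_mul]
  exact hy t ht _

theorem map_mem_of_coeff_eq_zero {M A S : Type*} [Monoid M] [Ring A] [SetLike S A]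
    [AddSubgroupClass S A] (f : MonoidAlgebra ℤ M →+* A) {H : Set M} {K : S}
    (hK : ∀ h ∈ H, f (of ℤ M h) ∈ K) {y : MonoidAlgebra ℤ M} (hy : ∀ g ∉ H, y.coeff g = 0) :
    f y ∈ K := by
  rw [← sum_coeff_single y, Finsupp.sum, map_sum]
  refine sum_mem fun g hg => ?_
  have hgH : g ∈ H := by_contra fun h => Finsupp.mem_support_iff.mp hg (hy g h)
  rw [show single g (y.coeff g) = y.coeff g • of ℤ M g by rw [of_apply, smul_single', mul_one],
    map_zsmul]
  exact zsmul_mem (hK g hgH) _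

theorem map_cosetComponent_eq_zero {F L : Type*} [Field F] [Field L] [Algebra F L]
    (φ : MonoidAlgebra ℤ G →+* L) {H : Subgroup G} {T : Finset G}
    (hT : ∀ g : G, ∃! t, t ∈ T ∧ g⁻¹ * t ∈ H) {K : IntermediateField F L}
    (hK : ∀ h ∈ H, φ (of ℤ G h) ∈ K) (hli : LinearIndependent K fun t : T => φ (of ℤ G t))
    {x : MonoidAlgebra ℤ G} (hx : φ x = 0) : ∀ t ∈ T, φ (cosetComponent H t x) = 0 := by
  refine hli.eq_zero_of_sum_mul_eq_zero (v := fun t => φ (of ℤ G t))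
    (fun t _ => map_mem_of_coeff_eq_zero φ (H := H) hK fun _ => coeff_cosetComponent_of_notMem t x) ?_
  rw [← hx]
  conv_rhs => rw [← sum_of_mul_cosetComponent hT x]
  simp only [map_sum, map_mul]

end MonoidAlgebra

open MonoidAlgebra in
/-- Theorem 3.1: with `G = ⟨z⟩` cyclic of order `m = p₁^{a₁}⋯p_r^{a_r}`,
`φ : ℤG → ℂ` the ring homomorphism with `φ(z) = ζ` (`ζ` a primitive `m`-th root
of unity), `G₀ ⊆ G` the unique subgroup of order `p₁⋯p_r`, and `g₁, …, g_s` a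
complete set of coset representatives of `G₀` in `G` (given by the finset `T`),
one has `ℕG ∩ ker φ = ∑_j g_j · (ℕG₀ ∩ ker φ)`, where elements of
`ℕG₀ ∩ ker φ` are viewed inside `ℤG` as the nonnegative elements of `ker φ`
supported on `G₀`. -/
theorem NG_inter_ker_eq_coset_decomposition
    (m : ℕ) (hm : 0 < m)
    (G : Type) [CommGroup G] [Fintype G] (hcard : Fintype.card G = m)
    (z : G) (hz : ∀ g : G, g ∈ Subgroup.zpowers z)
    (ζ : ℂ) (hζ : IsPrimitiveRoot ζ m)
    (φ : MonoidAlgebra ℤ G →+* ℂ) (hφ : φ (MonoidAlgebra.of ℤ G z) = ζ)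
    (G₀ : Subgroup G) (hG₀ : Nat.card G₀ = ∏ p ∈ m.primeFactors, p)
    (T : Finset G) (hT : ∀ g : G, ∃! t, t ∈ T ∧ g⁻¹ * t ∈ G₀) :
    {x : MonoidAlgebra ℤ G | (∀ g, 0 ≤ x.coeff g) ∧ φ x = 0} =
      {x : MonoidAlgebra ℤ G | ∃ y : G → MonoidAlgebra ℤ G,
        (∀ t ∈ T, (∀ g, 0 ≤ (y t).coeff g) ∧ φ (y t) = 0 ∧ ∀ g ∉ G₀, (y t).coeff g = 0) ∧
        x = ∑ t ∈ T, MonoidAlgebra.of ℤ G t * y t} := by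
  set n₀ := ∏ p ∈ m.primeFactors, p
  set s := m / n₀
  have hm_eq : m = s * n₀ := (Nat.div_mul_cancel (Nat.prod_primeFactors_dvd m)).symm
  have htot : (s * n₀).totient = s * n₀.totient :=
    hm_eq ▸ Nat.totient_eq_div_mul_totient_prod_primeFactors m
  have : IsCyclic G := ⟨z, hz⟩
  let χ : G →* ℂ := (φ : MonoidAlgebra ℤ G →* ℂ).comp (of ℤ G)
  have hχ : Function.Injective χ := χ.injective_of_orderOf_map_eq hz <| by
    rw [show χ z = ζ from hφ, ← hζ.eq_orderOf, orderOf_eq_card_of_forall_mem_zpowers hz,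
      Nat.card_eq_fintype_card, hcard]
  rw [hm_eq] at hζ hm
  have : NeZero n₀ := ⟨(Nat.pos_of_mul_pos_left hm).ne'⟩
  have hK : ∀ g ∈ G₀, φ (of ℤ G g) ∈ ℚ⟮ζ ^ s⟯ := fun g hg =>
    (hζ.pow hm rfl).mem_adjoin_simple_of_pow_eq_one <| by
      rw [← map_pow, ← map_pow, ← hG₀, G₀.mem_iff_pow_natCard_eq_one.mp hg, map_one, map_one]
  have hli := hζ.linearIndependent_map_cosetReps hm htot (by rw [Nat.card_eq_fintype_card, hcard,
    hm_eq]) hχ hG₀ hT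
  ext x
  constructor
  · rintro ⟨hpos, hker⟩
    exact ⟨fun t => cosetComponent G₀ t x, fun t ht => ⟨coeff_cosetComponent_nonneg t hpos,
      map_cosetComponent_eq_zero φ hT hK hli hker t ht, fun _ => coeff_cosetComponent_of_notMem t x⟩,
      (sum_of_mul_cosetComponent hT x).symm⟩
  · rintro ⟨y, hy, rfl⟩
    refine ⟨coeff_sum_of_mul_nonneg fun t ht => (hy t ht).1, ?_⟩
    rw [map_sum]
    exact Finset.sum_eq_zero fun t ht => by rw [map_mul, (hy t ht).2.1, mul_zero]
end

section
/- Let m be a positive integer and let α_1 + α_2 + ... + α_n = 0 (n ≥ 1) be a minimal vanishing sum of m-th roots of unity in ℂ. Then there exists an m-th root of unity u such that every u·α_i is an m_0-th root of unity, where m_0 is the radical of m (the product of the distinct primes dividing m); in particular (u·α_1) + ... + (u·α_n) = 0 is a vanishing sum of m_0-th roots of unity with m_0 square-free. -/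
/-!
Suppose `p ^ 2 ∣ m` and put `n = m / p`, so that `m ∣ n ^ 2`. Then every `1 + k n` is prime to `m`,
so the Galois conjugation `α ↦ α ^ (1 + k n) = α (α ^ n) ^ k` preserves vanishing sums of `m`-th
roots of unity. As the `α ^ n` are `n`-th roots of unity, averaging these twisted sums over `k`
shows that each fibre `{α ∈ S | α ^ n = γ}` sums to zero on its own. By minimality `S` is a single
fibre, so `α₀⁻¹ S` (for any `α₀ ∈ S`) is a minimal vanishing sum of `n`-th roots of unity, and we
conclude by induction on `m`, since `n` and `m` have the same prime factors.
-/

open Polynomial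

def IsMinimalVanishingSum {M : Type*} [AddCommMonoid M] (S : Multiset M) : Prop :=
  S ≠ 0 ∧ S.sum = 0 ∧ ∀ T ≤ S, T ≠ 0 → T ≠ S → T.sum ≠ 0

namespace IsMinimalVanishingSum

variable {M N : Type*} [AddCommMonoid M] [AddCommMonoid N] {S : Multiset M}

theorem map_addEquiv (hS : IsMinimalVanishingSum S) (e : M ≃+ N) :
    IsMinimalVanishingSum (S.map e) := by
  obtain ⟨hS0, hsum, hmin⟩ := hS
  refine ⟨by simpa using hS0, by rw [← map_multiset_sum, hsum, map_zero], ?_⟩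
  intro T hTS hT0 hTS' hTsum
  have hback : (T.map e.symm).map e = T := by simp [Multiset.map_map]
  refine hmin (T.map e.symm) ?_ (by simpa using hT0) (fun h => hTS' (by rw [← hback, h])) ?_
  · simpa [Multiset.map_map] using Multiset.map_le_map (f := e.symm) hTS
  · rw [← map_multiset_sum, hTsum, map_zero]

theorem forall_of_sum_filter_eq_zero (hS : IsMinimalVanishingSum S) {P : M → Prop}
    [DecidablePred P] (hP : (S.filter P).sum = 0) {a : M} (ha : a ∈ S) (hPa : P a) :
    ∀ b ∈ S, P b := by
  have hne : S.filter P ≠ 0 := fun h => by simpa [h] using Multiset.mem_filter.2 ⟨ha, hPa⟩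
  have heq : S.filter P = S := by
    by_contra h
    exact hS.2.2 _ (Multiset.filter_le P S) hne h hP
  exact Multiset.filter_eq_self.1 heq

theorem map_mul_left {K : Type*} [DivisionRing K] {S : Multiset K}
    (hS : IsMinimalVanishingSum S) {u : K} (hu : u ≠ 0) :
    IsMinimalVanishingSum (S.map (u * ·)) :=
  hS.map_addEquiv { Equiv.mulLeft₀ u hu with map_add' := mul_add u }

end IsMinimalVanishingSum

theorem Multiset.exists_map_eq_of_forall_mem {α β : Type*} {f : α → β} {s : Multiset β}
    (h : ∀ b ∈ s, ∃ a, f a = b) : ∃ t : Multiset α, t.map f = s := by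
  choose g hg using h
  refine ⟨s.attach.map fun b => g b.1 b.2, ?_⟩
  rw [Multiset.map_map]
  conv_rhs => rw [← Multiset.attach_map_val s]
  exact Multiset.map_congr rfl fun b _ => hg b.1 b.2

theorem geom_sum_eq_ite_of_pow_eq_one {K : Type*} [Field K] [DecidableEq K] {ξ : K} {n : ℕ}
    (hξ : ξ ^ n = 1) :
    ∑ k ∈ Finset.range n, ξ ^ k = if ξ = 1 then (n : K) else 0 := by
  split_ifs with h
  · simp [h]
  · rw [geom_sum_eq h, hξ, sub_self, zero_div]

theorem Multiset.sum_map_ite {ι M : Type*} [AddCommMonoid M] (S : Multiset ι) (p : ι → Prop)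
    [DecidablePred p] (h : ι → M) :
    (S.map fun i => if p i then h i else 0).sum = ((S.filter p).map h).sum := by
  induction S using Multiset.induction_on with
  | empty => simp
  | cons a S ih => by_cases ha : p a <;> simp [ha, ih]

-- Weighting the `k`-th twisted sum by `γ⁻¹ ^ k` and summing over `k` leaves `n` • (fibre sum).
theorem Multiset.sum_filter_eq_zero_of_twisted_sums_eq_zero {ι K : Type*} [Field K] [CharZero K]
    [DecidableEq K] {n : ℕ} (hn : 0 < n) {S : Multiset ι} {f g : ι → K} (hf : ∀ i ∈ S, f i ^ n = 1)
    (htwist : ∀ k < n, (S.map fun i => g i * f i ^ k).sum = 0) {γ : K} (hγ : γ ^ n = 1) :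
    ((S.filter (f · = γ)).map g).sum = 0 := by
  have hγ0 : γ ≠ 0 := by rintro rfl; simp [hn.ne'] at hγ
  have hpoint : ∀ i ∈ S, ∑ k ∈ Finset.range n, γ⁻¹ ^ k * (g i * f i ^ k)
      = if f i = γ then (n : K) * g i else 0 := by
    intro i hi
    have hξ : (f i * γ⁻¹) ^ n = 1 := by rw [mul_pow, hf i hi, inv_pow, hγ, inv_one, one_mul]
    calc ∑ k ∈ Finset.range n, γ⁻¹ ^ k * (g i * f i ^ k)
        = g i * ∑ k ∈ Finset.range n, (f i * γ⁻¹) ^ k := by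
          rw [Finset.mul_sum]; exact Finset.sum_congr rfl fun k _ => by ring
      _ = _ := by
          simp only [geom_sum_eq_ite_of_pow_eq_one hξ, mul_inv_eq_one₀ hγ0]
          split_ifs <;> ring
  have key : (n : K) * ((S.filter (f · = γ)).map g).sum = 0 := calc
    _ = (S.map fun i => if f i = γ then (n : K) * g i else 0).sum := by
      rw [Multiset.sum_map_ite, Multiset.sum_map_mul_left]
    _ = (S.map fun i => ∑ k ∈ Finset.range n, γ⁻¹ ^ k * (g i * f i ^ k)).sum :=
      congrArg _ (Multiset.map_congr rfl fun i hi => (hpoint i hi).symm)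
    _ = ∑ k ∈ Finset.range n, γ⁻¹ ^ k * (S.map fun i => g i * f i ^ k).sum := by
      simp only [Multiset.sum_map_sum, Multiset.sum_map_mul_left]
    _ = 0 := Finset.sum_eq_zero fun k hk => by rw [htwist k (Finset.mem_range.1 hk), mul_zero]
  exact (mul_eq_zero.1 key).resolve_left (Nat.cast_ne_zero.2 hn.ne')

theorem sum_map_pow_eq_zero_of_coprime {m a : ℕ} (hm : 0 < m) (ha : a.Coprime m)
    {S : Multiset ℂ} (hroots : ∀ α ∈ S, α ^ m = 1) (hsum : S.sum = 0) :
    (S.map (· ^ a)).sum = 0 := by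
  have hζ := Complex.isPrimitiveRoot_exp m hm.ne'
  set ζ := Complex.exp (2 * Real.pi * Complex.I / m)
  have : NeZero m := ⟨hm.ne'⟩
  obtain ⟨E, rfl⟩ : ∃ E : Multiset ℕ, E.map (ζ ^ ·) = S :=
    Multiset.exists_map_eq_of_forall_mem fun α hα => by
      obtain ⟨i, -, hi⟩ := hζ.eq_pow_of_pow_eq_one (hroots α hα)
      exact ⟨i, hi⟩
  set P : ℚ[X] := (E.map (X ^ ·)).sum
  have hP : ∀ β : ℂ, aeval β P = (E.map (β ^ ·)).sum := by
    simp [P, map_multiset_sum, Multiset.map_map]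
  have hminpoly : minpoly ℚ ζ = minpoly ℚ (ζ ^ a) := by
    rw [← cyclotomic_eq_minpoly_rat hζ hm, ← cyclotomic_eq_minpoly_rat (hζ.pow_of_coprime a ha) hm]
  have hdvd : minpoly ℚ (ζ ^ a) ∣ P := hminpoly ▸ minpoly.dvd ℚ ζ (by rw [hP, hsum])
  have hconj : aeval (ζ ^ a) P = 0 := aeval_eq_zero_of_dvd_aeval_eq_zero hdvd (minpoly.aeval ℚ _)
  rw [hP] at hconj
  simpa [Multiset.map_map, Function.comp_def, pow_right_comm ζ] using hconj

theorem Nat.coprime_one_add_mul_of_dvd_sq {m n : ℕ} (hmn : m ∣ n ^ 2) (k : ℕ) :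
    Nat.Coprime (1 + k * n) m := by
  have hn : Nat.Coprime (1 + k * n) n := (Nat.coprime_add_mul_right_left 1 n k).2 n.coprime_one_left
  exact (hn.pow_right 2).coprime_dvd_right hmn

theorem Nat.primeFactors_mul_eq_left_of_dvd {n k : ℕ} (hn : n ≠ 0) (hk : k ≠ 0) (hkn : k ∣ n) :
    (n * k).primeFactors = n.primeFactors := by
  rw [Nat.primeFactors_mul hn hk, Finset.union_eq_left]
  exact Nat.primeFactors_mono hkn hn

theorem IsMinimalVanishingSum.pow_eq_pow_of_dvd_sq {m n : ℕ} (hm : 0 < m) (hmn : m ∣ n ^ 2)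
    {S : Multiset ℂ} (hS : IsMinimalVanishingSum S)
    (hroots : ∀ α ∈ S, α ^ m = 1) {α₀ : ℂ} (hα₀ : α₀ ∈ S) : ∀ α ∈ S, α ^ n = α₀ ^ n := by
  rcases n.eq_zero_or_pos with rfl | hn
  · simp
  have hpow : ∀ α ∈ S, (α ^ n) ^ n = 1 := fun α hα => by
    obtain ⟨c, hc⟩ := hmn
    rw [← pow_mul, ← sq, hc, pow_mul, hroots α hα, one_pow]
  have htwist : ∀ k < n, (S.map fun α => α * (α ^ n) ^ k).sum = 0 := fun k _ => by
    simpa [pow_add, pow_mul, mul_comm] using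
      sum_map_pow_eq_zero_of_coprime hm (Nat.coprime_one_add_mul_of_dvd_sq hmn k) hroots hS.2.1
  refine hS.forall_of_sum_filter_eq_zero ?_ hα₀ rfl
  simpa using Multiset.sum_filter_eq_zero_of_twisted_sums_eq_zero hn (f := (· ^ n)) (g := id)
    hpow htwist (hpow α₀ hα₀)

theorem IsMinimalVanishingSum.exists_rotate_pow_radical_eq_one {m : ℕ} (hm : 0 < m)
    {S : Multiset ℂ} (hS : IsMinimalVanishingSum S) (hroots : ∀ α ∈ S, α ^ m = 1) :
    ∃ u : ℂ, u ^ m = 1 ∧ ∀ α ∈ S, (u * α) ^ (∏ p ∈ m.primeFactors, p) = 1 := by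
  induction m using Nat.strong_induction_on generalizing S with
  | _ m ih =>
  by_cases hsq : Squarefree m
  · refine ⟨1, one_pow m, fun α hα => ?_⟩
    rw [one_mul, Nat.prod_primeFactors_of_squarefree hsq, hroots α hα]
  obtain ⟨p, hp, c, hc⟩ : ∃ p, p.Prime ∧ p * p ∣ m := by
    simpa [Nat.squarefree_iff_prime_squarefree] using hsq
  set n := p * c
  have hnm : m = n * p := by rw [hc]; ring
  have hn : 0 < n := Nat.pos_of_ne_zero fun h => by simp [h] at hnm; omega
  have hmn : m ∣ n ^ 2 := ⟨c, by rw [hc]; ring⟩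
  obtain ⟨α₀, hα₀⟩ := Multiset.exists_mem_of_ne_zero hS.1
  have hα₀0 : α₀ ≠ 0 := fun h => by simpa [h, hm.ne'] using hroots α₀ hα₀
  have hall := hS.pow_eq_pow_of_dvd_sq hm hmn hroots hα₀
  obtain ⟨u, hun, hu⟩ := ih n (hnm ▸ lt_mul_of_one_lt_right hn hp.one_lt) hn
    (hS.map_mul_left (inv_ne_zero hα₀0)) (by
      simp only [Multiset.mem_map]
      rintro _ ⟨α, hα, rfl⟩
      rw [mul_pow, hall α hα, inv_pow, inv_mul_cancel₀ (pow_ne_zero _ hα₀0)])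
  refine ⟨u * α₀⁻¹, ?_, fun α hα => ?_⟩
  · rw [mul_pow, inv_pow, hroots α₀ hα₀, inv_one, mul_one, hnm, pow_mul, hun, one_pow]
  · rw [hnm, Nat.primeFactors_mul_eq_left_of_dvd hn.ne' hp.ne_zero (dvd_mul_right p c), mul_assoc]
    exact hu _ (Multiset.mem_map_of_mem _ hα)

/-- Corollary 3.2: every minimal vanishing sum of `m`-th roots of unity can be
rotated (multiplied by a single `m`-th root of unity `u`) so that all its terms
become `m₀`-th roots of unity, where `m₀` is the radical of `m`. -/
theorem minimal_vanishing_sum_rotate_to_squarefree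
    (m : ℕ) (hm : 0 < m) (S : Multiset ℂ) (hS : S ≠ 0)
    (hroots : ∀ α ∈ S, α ^ m = 1) (hsum : S.sum = 0)
    (hmin : ∀ T : Multiset ℂ, T ≤ S → T ≠ 0 → T ≠ S → T.sum ≠ 0) :
    ∃ u : ℂ, u ^ m = 1 ∧ ∀ α ∈ S, (u * α) ^ (∏ p ∈ m.primeFactors, p) = 1 :=
  IsMinimalVanishingSum.exists_rotate_pow_radical_eq_one hm ⟨hS, hsum, hmin⟩ hroots
end

section
/- Let G = ⟨z⟩ be a multiplicative cyclic group of order m = p^a, where p is prime and a > 0, and let P_1 be the unique subgroup of G of order p. Then ℕG ∩ ker φ = {y·σ(P_1) : y ∈ ℕG}. Equivalently, every vanishing sum of p^a-th roots of unity is a sum of rotations (by p^a-th roots of unity) of the basic vanishing sum 1 + ζ_p + ζ_p² + ... + ζ_p^{p-1} = 0. -/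
noncomputable section

/-!
Write `x ∈ ℕG` as `f(z)` with `f ∈ ℤ[X]` of degree `< p^a` and nonnegative coefficients. Then
`φ x = f(ζ) = 0` means `Φ_{p^a} ∣ f`, say `f = Φ_{p^a} q`, and `deg q < p^{a-1}`. Since
`Φ_{p^a} = ∑_{i<p} X^{i p^{a-1}} ≡ 1 mod X^{p^{a-1}}`, the coefficients of `q` are coefficients
of `f`, so `q(z) ∈ ℕG`. Finally `Φ_{p^a}(z) = σ(P₁)`, as `P₁` is generated by `z^{p^{a-1}}`.
-/

open Polynomial

theorem IsCyclic.subgroup_eq_of_card_eq {G : Type*} [CommGroup G] [IsCyclic G] [Finite G]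
    {H K : Subgroup G} (h : Nat.card H = Nat.card K) : H = K := by
  have eq_ker : ∀ H : Subgroup G, H = (powMonoidHom (Nat.card H) : G →* G).ker := fun H =>
    Subgroup.eq_of_le_of_card_ge
      (fun g hg => Subtype.ext_iff.mp (pow_card_eq_one' (x := (⟨g, hg⟩ : H))))
      (by rw [IsCyclic.card_powMonoidHom_ker,
        Nat.gcd_eq_right (Subgroup.card_subgroup_dvd_card H)])
  rw [eq_ker H, eq_ker K, h]

namespace MonoidAlgebra

variable {R G : Type*}

section Nonneg

variable [Semiring R] [PartialOrder R] [IsOrderedRing R] [Monoid G]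

variable (R G) in
/-- The paper's `ℕG` for `R = ℤ`. -/
def nonnegCoeff : Subsemiring (MonoidAlgebra R G) where
  carrier := {x | ∀ g, 0 ≤ x.coeff g}
  mul_mem' {x y} hx hy g := by
    classical
    rw [coeff_mul]
    exact Finsupp.sum_nonneg' fun g₁ => Finsupp.sum_nonneg' fun g₂ => by
      split_ifs
      exacts [mul_nonneg (hx g₁) (hy g₂), le_rfl]
  one_mem' g := by
    classical
    rw [one_def, coeff_single, Finsupp.single_apply]
    split_ifs <;> simp
  add_mem' hx hy g := add_nonneg (hx g) (hy g)
  zero_mem' _ := le_rfl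

lemma single_mem_nonnegCoeff (g : G) {r : R} (hr : 0 ≤ r) : single g r ∈ nonnegCoeff R G := by
  classical
  intro g'
  rw [coeff_single, Finsupp.single_apply]
  split_ifs <;> simp [hr]

end Nonneg

lemma aeval_of_mem_nonnegCoeff [CommSemiring R] [PartialOrder R] [IsOrderedRing R] [Monoid G]
    (z : G) {f : R[X]} (hf : ∀ i, 0 ≤ f.coeff i) : aeval (of R G z) f ∈ nonnegCoeff R G := by
  classical
  rw [aeval_eq_sum_range]
  refine Subsemiring.sum_mem _ fun i _ => ?_
  rw [of_apply, single_pow, one_pow, smul_single', mul_one]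
  exact single_mem_nonnegCoeff _ (hf i)

lemma aeval_of_ofFn_coeff_pow [CommSemiring R] [DecidableEq R] [Group G] [Fintype G] {z : G}
    (hz : ∀ g, g ∈ Subgroup.zpowers z) (x : MonoidAlgebra R G) :
    aeval (of R G z) (ofFn (orderOf z) fun k => x.coeff (z ^ (k : ℕ))) = x := by
  have hbij : Function.Bijective fun k : Fin (orderOf z) => z ^ (k : ℕ) := by
    refine ⟨fun i j hij => Fin.ext (pow_injOn_Iio_orderOf i.2 j.2 hij), fun g => ?_⟩
    classical
    obtain ⟨k, hk, rfl⟩ := Finset.mem_image.mp (mem_zpowers_iff_mem_range_orderOf.mp (hz g))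
    exact ⟨⟨k, Finset.mem_range.mp hk⟩, rfl⟩
  rw [ofFn_eq_sum_monomial, map_sum]
  calc ∑ k : Fin (orderOf z), aeval (of R G z) (monomial k (x.coeff (z ^ (k : ℕ))))
      _ = ∑ k : Fin (orderOf z), single (z ^ (k : ℕ)) (x.coeff (z ^ (k : ℕ))) := by
        simp [aeval_monomial, coe_algebraMap, of_apply, single_pow]
      _ = ∑ g, single g (x.coeff g) := Fintype.sum_bijective _ hbij _ _ fun _ => rfl
      _ = x := by rw [← Finsupp.sum_fintype _ _ (fun _ => single_zero _), sum_coeff_single]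

end MonoidAlgebra

namespace Polynomial

variable {R : Type*} [CommRing R] {p k : ℕ}

theorem X_pow_dvd_cyclotomic_prime_pow_sub_one (hp : p.Prime) :
    X ^ p ^ k ∣ cyclotomic (p ^ (k + 1)) R - 1 := by
  obtain ⟨n, hn⟩ := Nat.exists_eq_add_one_of_ne_zero hp.ne_zero
  rw [cyclotomic_prime_pow_eq_geom_sum hp, hn, geom_sum_succ, add_sub_cancel_right]
  exact dvd_mul_right _ _

theorem coeff_cyclotomic_prime_pow_mul_of_lt (hp : p.Prime) {i : ℕ} (hi : i < p ^ k) (q : R[X]) :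
    (cyclotomic (p ^ (k + 1)) R * q).coeff i = q.coeff i := by
  have := X_pow_dvd_iff.mp ((X_pow_dvd_cyclotomic_prime_pow_sub_one (k := k) hp).mul_right q) i hi
  rwa [sub_mul, one_mul, coeff_sub, sub_eq_zero] at this

theorem natDegree_lt_of_cyclotomic_prime_pow_mul [Nontrivial R] (hp : p.Prime) {q : R[X]}
    (h : (cyclotomic (p ^ (k + 1)) R * q).natDegree < p ^ (k + 1)) : q.natDegree < p ^ k := by
  rcases eq_or_ne q 0 with rfl | hq
  · simpa using pow_pos hp.pos k
  rw [(cyclotomic.monic _ R).natDegree_mul' hq, natDegree_cyclotomic,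
    Nat.totient_prime_pow_succ hp] at h
  have : p ^ (k + 1) = p ^ k * (p - 1) + p ^ k := by
    rw [pow_succ, ← Nat.mul_add_one, Nat.sub_add_cancel hp.one_le]
  omega

theorem coeff_nonneg_of_cyclotomic_prime_pow_mul [PartialOrder R] [Nontrivial R] (hp : p.Prime)
    {q : R[X]} (hdeg : (cyclotomic (p ^ (k + 1)) R * q).natDegree < p ^ (k + 1))
    (hnonneg : ∀ i, 0 ≤ (cyclotomic (p ^ (k + 1)) R * q).coeff i) (i : ℕ) : 0 ≤ q.coeff i := by
  rcases lt_or_ge i (p ^ k) with hi | hi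
  · rw [← coeff_cyclotomic_prime_pow_mul_of_lt hp hi]
    exact hnonneg i
  · rw [coeff_eq_zero_of_natDegree_lt
      ((natDegree_lt_of_cyclotomic_prime_pow_mul hp hdeg).trans_le hi)]

end Polynomial

open Polynomial in
theorem IsPrimitiveRoot.aeval_eq_zero_iff_cyclotomic_dvd {K : Type*} [Field K] [CharZero K]
    {n : ℕ} (hn : 0 < n) {ζ : K} (hζ : IsPrimitiveRoot ζ n) (f : ℤ[X]) :
    aeval ζ f = 0 ↔ cyclotomic n ℤ ∣ f := by
  rw [cyclotomic_eq_minpoly hζ hn]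
  exact minpoly.isIntegrallyClosed_dvd_iff (hζ.isIntegral hn) f

lemma grpSum_zpowers_s4 {G : Type*} [CommGroup G] [Finite G] (w : G) :
    grpSum (Subgroup.zpowers w : Set G) (Set.toFinite _) =
      ∑ i ∈ Finset.range (orderOf w), MonoidAlgebra.of ℤ G w ^ i := by
  classical
  have : (Set.toFinite (Subgroup.zpowers w : Set G)).toFinset =
      (Finset.range (orderOf w)).image (w ^ ·) := by
    ext g
    rw [Set.Finite.mem_toFinset, SetLike.mem_coe, mem_zpowers_iff_mem_range_orderOf]
  rw [grpSum, this, Finset.sum_image fun i hi j hj =>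
    pow_injOn_Iio_orderOf (by simpa using hi) (by simpa using hj)]
  simp only [map_pow]

theorem grpSum_mem_nonnegCoeff {G : Type*} [CommGroup G] (s : Set G) (hs : s.Finite) :
    grpSum s hs ∈ MonoidAlgebra.nonnegCoeff ℤ G :=
  Subsemiring.sum_mem _ fun g _ => MonoidAlgebra.single_mem_nonnegCoeff g zero_le_one

theorem grpSum_eq_aeval_cyclotomic {G : Type*} [CommGroup G] [Finite G] {p k : ℕ}
    (hp : p.Prime) {z : G} (hz : ∀ g, g ∈ Subgroup.zpowers z) (hord : orderOf z = p ^ (k + 1))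
    {P : Subgroup G} (hP : Nat.card P = p) :
    grpSum (P : Set G) (Set.toFinite _) =
      aeval (MonoidAlgebra.of ℤ G z) (cyclotomic (p ^ (k + 1)) ℤ) := by
  have : IsCyclic G := ⟨z, hz⟩
  have hw : orderOf (z ^ p ^ k) = p := by
    rw [orderOf_pow' _ (pow_pos hp.pos k).ne', hord,
      Nat.gcd_eq_right (pow_dvd_pow p k.le_succ), pow_succ,
      Nat.mul_div_cancel_left _ (pow_pos hp.pos k)]
  obtain rfl : P = Subgroup.zpowers (z ^ p ^ k) :=
    IsCyclic.subgroup_eq_of_card_eq (by rw [hP, Nat.card_zpowers, hw])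
  simp [grpSum_zpowers_s4, hw, cyclotomic_prime_pow_eq_geom_sum hp, MonoidAlgebra.single_pow]

/-- Theorem 3.3(1): for `G = ⟨z⟩` cyclic of prime-power order `m = p^a` and
`φ : ℤG → ℂ` the ring homomorphism with `φ(z) = ζ` (`ζ` a primitive `m`-th root
of unity), with `P₁` the unique subgroup of order `p`:
`ℕG ∩ ker φ = {y·σ(P₁) : y ∈ ℕG}`; i.e. every vanishing sum of `p^a`-th roots of
unity is a sum of rotations of `1 + ζ_p + ⋯ + ζ_p^{p-1} = 0`. -/
theorem NG_inter_ker_prime_power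
    (p a : ℕ) (hp : p.Prime) (ha : 0 < a)
    (G : Type) [CommGroup G] [Fintype G] (hcard : Fintype.card G = p ^ a)
    (z : G) (hz : ∀ g : G, g ∈ Subgroup.zpowers z)
    (ζ : ℂ) (hζ : IsPrimitiveRoot ζ (p ^ a))
    (φ : MonoidAlgebra ℤ G →+* ℂ) (hφ : φ (MonoidAlgebra.of ℤ G z) = ζ)
    (P₁ : Subgroup G) (hP₁ : Nat.card P₁ = p) :
    {x : MonoidAlgebra ℤ G | (∀ g, 0 ≤ x.coeff g) ∧ φ x = 0} =
      {x : MonoidAlgebra ℤ G | ∃ y : MonoidAlgebra ℤ G, (∀ g, 0 ≤ y.coeff g) ∧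
        x = y * grpSum (P₁ : Set G) (Set.toFinite _)} := by
  obtain ⟨k, rfl⟩ := Nat.exists_eq_add_one_of_ne_zero ha.ne'
  have hord : orderOf z = p ^ (k + 1) := by
    rw [orderOf_eq_card_of_forall_mem_zpowers hz, Nat.card_eq_fintype_card, hcard]
  have hσ := grpSum_eq_aeval_cyclotomic hp hz hord hP₁
  have hφ_aeval (f : ℤ[X]) : φ (aeval (MonoidAlgebra.of ℤ G z) f) = aeval ζ f := by
    rw [← hφ]
    exact (aeval_algHom_apply φ.toIntAlgHom _ f).symm
  have hker (f : ℤ[X]) := hζ.aeval_eq_zero_iff_cyclotomic_dvd (pow_pos hp.pos _) f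
  ext x
  constructor
  · rintro ⟨hx, hφx⟩
    set f := ofFn (orderOf z) fun i => x.coeff (z ^ (i : ℕ))
    have hfx : aeval (MonoidAlgebra.of ℤ G z) f = x := MonoidAlgebra.aeval_of_ofFn_coeff_pow hz x
    have hdeg : f.natDegree < p ^ (k + 1) := hord ▸ ofFn_natDegree_lt (orderOf_pos z) _
    have hf : ∀ i, 0 ≤ f.coeff i := fun i => by
      rcases lt_or_ge i (orderOf z) with hi | hi
      · rw [ofFn_coeff_eq_val_of_lt _ hi]; exact hx _
      · rw [ofFn_coeff_eq_zero_of_ge _ hi]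
    obtain ⟨q, hfq⟩ := (hker f).mp (by rw [← hφ_aeval, hfx, hφx])
    rw [hfq] at hdeg hf
    refine ⟨aeval (MonoidAlgebra.of ℤ G z) q, MonoidAlgebra.aeval_of_mem_nonnegCoeff z
      (coeff_nonneg_of_cyclotomic_prime_pow_mul hp hdeg hf), ?_⟩
    rw [← hfx, hfq, map_mul, hσ, mul_comm]
  · rintro ⟨y, hy, rfl⟩
    refine ⟨(MonoidAlgebra.nonnegCoeff ℤ G).mul_mem hy (grpSum_mem_nonnegCoeff _ _), ?_⟩
    rw [map_mul, hσ, hφ_aeval, (hker _).mpr dvd_rfl, mul_zero]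

end
end

section
/- Let m be an even positive integer. If m is a power of 2, then W(m) = 2ℕ, the set of even natural numbers. If m is not a power of 2 and p is the smallest odd prime dividing m, then W(m) = {n ∈ ℕ : n is even} ∪ {n ∈ ℕ : n ≥ p}, i.e. W(m) = {0, 2, 4, ..., p − 1, p, p + 1, p + 2, ...}. -/
/-- `n ∈ W(m)` : there exists a vanishing sum of `n` many `m`-th roots of unity. -/
def IsVanishingWeight (m n : ℕ) : Prop :=
  ∃ α : Fin n → ℂ, (∀ i, α i ^ m = 1) ∧ ∑ i, α i = 0

/-!
Even weights come from pairs `ζ, -ζ`, and `p + 2k` from the `p`-th roots of unity plus pairs.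
Conversely, a vanishing sum of an odd number `n` of `m`-th roots of unity forces an odd prime
`q ∣ m` with `q ≤ n`. This is proved for sums `∑ εᵢ αᵢ` with odd integer weights, by induction
on `m = p * M'` with `p` prime. Write `αᵢ = ξ ^ rᵢ * γᵢ` with `rᵢ < p` and `γᵢ` an `M'`-th root of
unity, where `ξ` is a primitive `m`-th root of unity if `p ∣ M'` and a primitive `p`-th one
otherwise, and group the terms by `rᵢ`. The fibre sums lie in `ℚ(μ_M')`. If `p ∣ M'` then `ξ` has
degree `p` over that field, so every fibre sum vanishes. If `p ∤ M'` then `ξ` has degree `p - 1`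
and `1 + ξ + ⋯ + ξ ^ (p - 1) = 0`, so all fibre sums are equal. A vanishing fibre of odd
size gives the induction step. Equal nonzero fibre sums make all `p` fibres nonempty, so
`p ≤ n`. When `p = 2 ∤ M'`, instead `αᵢ = ±γᵢ`, and the sign is absorbed into the weight.
-/

open IntermediateField Polynomial Finset

theorem IsPrimitiveRoot.mul_of_coprime {M : Type*} [CommMonoid M] {ζ ξ : M} {k l : ℕ}
    (hζ : IsPrimitiveRoot ζ k) (hξ : IsPrimitiveRoot ξ l) (hkl : k.Coprime l) :
    IsPrimitiveRoot (ζ * ξ) (k * l) := by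
  rw [IsPrimitiveRoot.iff_orderOf, (Commute.all ζ ξ).orderOf_mul_eq_mul_orderOf_of_coprime,
    ← hζ.eq_orderOf, ← hξ.eq_orderOf]
  rwa [← hζ.eq_orderOf, ← hξ.eq_orderOf]

theorem pow_eq_one_or_neg_pow_eq_one {R : Type*} [CommRing R] [NoZeroDivisors R] {α : R}
    {n : ℕ} (hn : Odd n) (h : α ^ (2 * n) = 1) : α ^ n = 1 ∨ (-α) ^ n = 1 := by
  rw [hn.neg_pow, neg_eq_iff_eq_neg, ← mul_self_eq_one_iff, ← pow_add, ← two_mul, h]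

theorem IntermediateField.eq_zero_of_sum_mul_pow_eq_zero {F L : Type*} [Field F] [Field L]
    [Algebra F L] {K : IntermediateField F L} {ξ : L} {d : ℕ}
    (hd : d ≤ (minpoly K ξ).natDegree) {a : ℕ → L} (ha : ∀ k < d, a k ∈ K)
    (h : ∑ k ∈ range d, a k * ξ ^ k = 0) : ∀ k < d, a k = 0 := by
  have hli : LinearIndependent K fun k : Fin d => ξ ^ (k : ℕ) :=
    (linearIndependent_pow ξ).comp (Fin.castLE hd) (Fin.castLE_injective hd)
  intro k hk
  have := Fintype.linearIndependent_iff.1 hli (fun i => ⟨a i, ha i i.2⟩)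
    (by simpa [Algebra.smul_def, Fin.sum_univ_eq_sum_range (fun i => a i * ξ ^ i)] using h)
    ⟨k, hk⟩
  simpa using congrArg Subtype.val this

theorem IntermediateField.eq_of_sum_mul_pow_eq_zero {F L : Type*} [Field F] [Field L]
    [Algebra F L] {K : IntermediateField F L} {ξ : L} {n : ℕ}
    (hn : n ≤ (minpoly K ξ).natDegree) (hgeom : ∑ k ∈ range (n + 1), ξ ^ k = 0)
    {a : ℕ → L} (ha : ∀ k < n + 1, a k ∈ K) (h : ∑ k ∈ range (n + 1), a k * ξ ^ k = 0) :
    ∀ k < n + 1, a k = a n := by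
  have hsub : ∑ k ∈ range n, (a k - a n) * ξ ^ k = 0 := by
    have : ∑ k ∈ range (n + 1), (a k - a n) * ξ ^ k = 0 := by
      simp only [sub_mul, sum_sub_distrib, ← mul_sum, h, hgeom, mul_zero, sub_zero]
    rwa [sum_range_succ, sub_self, zero_mul, add_zero] at this
  have hzero := eq_zero_of_sum_mul_pow_eq_zero hn
    (fun k hk => sub_mem (ha k (by omega)) (ha n n.lt_succ_self)) hsub
  intro k hk
  rcases Nat.lt_succ_iff_lt_or_eq.1 hk with hk | rfl
  · exact sub_eq_zero.1 (hzero k hk)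
  · rfl

theorem totient_lcm_le_natDegree_minpoly_mul_totient {θ ξ : ℂ} {k m : ℕ} (hk : 0 < k)
    (hm : 0 < m) (hξ : IsPrimitiveRoot ξ k) (hθ : IsPrimitiveRoot θ m) :
    (k.lcm m).totient ≤ (minpoly ℚ⟮θ⟯ ξ).natDegree * m.totient := by
  set K := ℚ⟮θ⟯
  have hθint : IsIntegral ℚ θ := (hθ.isIntegral hm).tower_top
  have hξint : IsIntegral K ξ := ((hξ.isIntegral hk).tower_top (A := ℚ)).tower_top
  have : FiniteDimensional ℚ K := adjoin.finiteDimensional hθint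
  have : FiniteDimensional K K⟮ξ⟯ := adjoin.finiteDimensional hξint
  have : FiniteDimensional ℚ K⟮ξ⟯ := Module.Finite.trans K K⟮ξ⟯
  have hinj : Function.Injective (algebraMap K⟮ξ⟯ ℂ) := (algebraMap K⟮ξ⟯ ℂ).injective
  have hx : IsPrimitiveRoot (AdjoinSimple.gen K ξ) k :=
    .of_map_of_injective (f := algebraMap K⟮ξ⟯ ℂ) (by simpa using hξ) hinj
  have hy : IsPrimitiveRoot (algebraMap K K⟮ξ⟯ (AdjoinSimple.gen ℚ θ)) m :=
    .of_map_of_injective (f := algebraMap K⟮ξ⟯ ℂ) (by simpa using hθ) hinj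
  calc (k.lcm m).totient ≤ Module.finrank ℚ K⟮ξ⟯ :=
        hx.lcm_totient_le_finrank hy (cyclotomic.irreducible_rat (Nat.lcm_pos hk hm))
    _ = Module.finrank ℚ K * Module.finrank K K⟮ξ⟯ := (Module.finrank_mul_finrank ℚ K K⟮ξ⟯).symm
    _ = (minpoly K ξ).natDegree * m.totient := by
        rw [adjoin.finrank hξint, adjoin.finrank hθint, ← cyclotomic_eq_minpoly_rat hθ hm,
          natDegree_cyclotomic, mul_comm]

theorem Finset.sum_mul_pow_eq_sum_range_fiberwise {ι R : Type*} [CommSemiring R] {s : Finset ι}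
    {r : ι → ℕ} {d : ℕ} (hr : ∀ i ∈ s, r i < d) (w : ι → R) (ξ : R) :
    ∑ i ∈ s, w i * ξ ^ r i = ∑ k ∈ range d, (∑ i ∈ s with r i = k, w i) * ξ ^ k := by
  rw [← sum_fiberwise_of_maps_to (g := r) (t := range d) (fun i hi => mem_range.2 (hr i hi))]
  refine sum_congr rfl fun k _ => ?_
  rw [sum_mul]
  exact sum_congr rfl fun i hi => by rw [(mem_filter.1 hi).2]

theorem Finset.exists_odd_card_filter_eq {ι κ : Type*} [DecidableEq κ] {s : Finset ι}
    (hs : Odd #s) (r : ι → κ) : ∃ k, Odd #{i ∈ s | r i = k} := by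
  rw [card_eq_sum_card_fiberwise (fun i hi => mem_image_of_mem r hi),
    odd_sum_iff_odd_card_odd] at hs
  obtain ⟨k, hk⟩ := card_pos.1 hs.pos
  exact ⟨k, (mem_filter.1 hk).2⟩

theorem Finset.sum_intCast_ne_zero_of_odd {ι R : Type*} [AddCommGroupWithOne R] [CharZero R]
    {s : Finset ι} {ε : ι → ℤ} (hε : ∀ i ∈ s, Odd (ε i)) (hs : Odd #s) :
    (∑ i ∈ s, ε i : R) ≠ 0 := by
  have heven : Even (∑ i ∈ s, (ε i - 1)) := even_sum _ fun i hi => (hε i hi).sub_odd odd_one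
  have hodd : Odd (∑ i ∈ s, ε i) := by
    simpa using heven.add_odd (by exact_mod_cast hs : Odd (#s : ℤ))
  exact_mod_cast (show ∑ i ∈ s, ε i ≠ 0 by rintro h; simp [h] at hodd)

theorem exists_fiberwise_sum_eq_zero_of_dvd {ι : Type*} {p M' : ℕ} (hp : p.Prime)
    (hM' : 0 < M') (hpM' : p ∣ M') {s : Finset ι} {c : ι → ℤ} {α : ι → ℂ}
    (hα : ∀ i ∈ s, α i ^ (p * M') = 1) (hsum : ∑ i ∈ s, c i * α i = 0) :
    ∃ (r : ι → ℕ) (γ : ι → ℂ), (∀ i ∈ s, r i < p) ∧ (∀ i ∈ s, γ i ^ M' = 1) ∧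
      ∀ k < p, ∑ i ∈ s with r i = k, c i * γ i = 0 := by
  have hM : p * M' ≠ 0 := (Nat.mul_pos hp.pos hM').ne'
  have : NeZero (p * M') := ⟨hM⟩
  obtain ⟨ζ, hζ⟩ : ∃ ζ : ℂ, IsPrimitiveRoot ζ (p * M') := ⟨_, Complex.isPrimitiveRoot_exp _ hM⟩
  choose! e _ he using fun i hi => hζ.eq_pow_of_pow_eq_one (hα i hi)
  refine ⟨fun i => e i % p, fun i => (ζ ^ p) ^ (e i / p), fun i _ => Nat.mod_lt _ hp.pos,
    fun i _ => ?_, ?_⟩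
  · rw [← pow_mul, mul_comm, pow_mul, ← pow_mul ζ, hζ.pow_eq_one, one_pow]
  have hdeg : p ≤ (minpoly ℚ⟮ζ ^ p⟯ ζ).natDegree := by
    have h := totient_lcm_le_natDegree_minpoly_mul_totient (Nat.pos_of_ne_zero hM) hM'
      hζ (hζ.pow (Nat.pos_of_ne_zero hM) rfl)
    rw [Nat.lcm_eq_left (dvd_mul_left M' p), Nat.totient_mul_of_prime_of_dvd hp hpM'] at h
    exact Nat.le_of_mul_le_mul_right h (Nat.totient_pos.2 hM')
  exact eq_zero_of_sum_mul_pow_eq_zero hdeg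
    (a := fun k => ∑ i ∈ s with e i % p = k, c i * (ζ ^ p) ^ (e i / p))
    (fun k _ => sum_mem fun i _ => mul_mem (intCast_mem _ _)
      (pow_mem (mem_adjoin_simple_self ℚ _) _))
    (by
      rw [← sum_mul_pow_eq_sum_range_fiberwise fun i _ => Nat.mod_lt _ hp.pos, ← hsum]
      refine sum_congr rfl fun i hi => ?_
      rw [← he i hi, ← pow_mul, mul_assoc, ← pow_add, Nat.div_add_mod])

theorem exists_fiberwise_sum_eq_of_coprime {ι : Type*} {p M' : ℕ} (hp : p.Prime)
    (hpM' : ¬ p ∣ M') {s : Finset ι} {c : ι → ℤ} {α : ι → ℂ}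
    (hα : ∀ i ∈ s, α i ^ (p * M') = 1) (hsum : ∑ i ∈ s, c i * α i = 0) :
    ∃ (r : ι → ℕ) (γ : ι → ℂ), (∀ i ∈ s, r i < p) ∧ (∀ i ∈ s, γ i ^ M' = 1) ∧
      ∀ k < p, ∑ i ∈ s with r i = k, c i * γ i = ∑ i ∈ s with r i = p - 1, c i * γ i := by
  have hM' : 0 < M' := Nat.pos_of_ne_zero fun h => hpM' (h ▸ dvd_zero p)
  have hcop : p.Coprime M' := (Nat.Prime.coprime_iff_not_dvd hp).2 hpM'
  have : NeZero (p * M') := ⟨(Nat.mul_pos hp.pos hM').ne'⟩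
  obtain ⟨η, hη⟩ : ∃ η : ℂ, IsPrimitiveRoot η p := ⟨_, Complex.isPrimitiveRoot_exp _ hp.ne_zero⟩
  obtain ⟨θ, hθ⟩ : ∃ θ : ℂ, IsPrimitiveRoot θ M' := ⟨_, Complex.isPrimitiveRoot_exp _ hM'.ne'⟩
  have hζ : IsPrimitiveRoot (η * θ) (p * M') := hη.mul_of_coprime hθ hcop
  choose! e _ he using fun i hi => hζ.eq_pow_of_pow_eq_one (hα i hi)
  refine ⟨fun i => e i % p, fun i => θ ^ e i, fun i _ => Nat.mod_lt _ hp.pos,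
    fun i _ => by rw [← pow_mul, mul_comm, pow_mul, hθ.pow_eq_one, one_pow], ?_⟩
  obtain ⟨n, rfl⟩ := Nat.exists_eq_add_one_of_ne_zero hp.ne_zero
  have hdeg : n ≤ (minpoly ℚ⟮θ⟯ η).natDegree := by
    have h := totient_lcm_le_natDegree_minpoly_mul_totient hp.pos hM' hη hθ
    rw [hcop.lcm_eq_mul, Nat.totient_mul hcop, Nat.totient_prime hp] at h
    exact Nat.le_of_mul_le_mul_right h (Nat.totient_pos.2 hM')
  have hηmod : ∀ m, η ^ (m % (n + 1)) = η ^ m := fun m => by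
    rw [hη.eq_orderOf, pow_mod_orderOf]
  exact eq_of_sum_mul_pow_eq_zero hdeg (hη.geom_sum_eq_zero hp.one_lt)
    (fun k _ => sum_mem fun i _ => mul_mem (intCast_mem _ _)
      (pow_mem (mem_adjoin_simple_self ℚ _) _))
    (by
      rw [← sum_mul_pow_eq_sum_range_fiberwise fun i _ => Nat.mod_lt _ hp.pos, ← hsum]
      refine sum_congr rfl fun i hi => ?_
      rw [← he i hi, mul_pow, hηmod]
      ring)

theorem exists_signed_sum_eq_of_odd {ι : Type*} {M' : ℕ} (hM' : Odd M') {s : Finset ι}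
    {ε : ι → ℤ} {α : ι → ℂ} (hε : ∀ i ∈ s, Odd (ε i)) (hα : ∀ i ∈ s, α i ^ (2 * M') = 1) :
    ∃ (ε' : ι → ℤ) (γ : ι → ℂ), (∀ i ∈ s, Odd (ε' i)) ∧ (∀ i ∈ s, γ i ^ M' = 1) ∧
      ∑ i ∈ s, ε' i * γ i = ∑ i ∈ s, ε i * α i := by
  classical
  refine ⟨fun i => if α i ^ M' = 1 then ε i else -ε i,
    fun i => if α i ^ M' = 1 then α i else -α i, fun i hi => ?_, fun i hi => ?_,
    sum_congr rfl fun i _ => ?_⟩ <;> dsimp only <;> split_ifs with h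
  · exact hε i hi
  · exact (hε i hi).neg
  · exact h
  · exact (pow_eq_one_or_neg_pow_eq_one hM' (hα i hi)).resolve_left h
  · rfl
  · push_cast; ring

theorem exists_odd_prime_dvd_le_card_of_sum_eq_zero {ι : Type*} {M : ℕ} (hM : 0 < M)
    {s : Finset ι} {ε : ι → ℤ} {α : ι → ℂ} (hε : ∀ i ∈ s, Odd (ε i))
    (hα : ∀ i ∈ s, α i ^ M = 1) (hsum : ∑ i ∈ s, ε i * α i = 0) (hs : Odd #s) :
    ∃ q, q.Prime ∧ Odd q ∧ q ∣ M ∧ q ≤ #s := by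
  induction M using Nat.strong_induction_on generalizing s ε α with
  | _ M IH =>
  obtain rfl | hM1 := eq_or_ne M 1
  · refine absurd ?_ (sum_intCast_ne_zero_of_odd (R := ℂ) hε hs)
    rw [← hsum]
    exact sum_congr rfl fun i hi => by rw [← pow_one (α i), hα i hi, mul_one]
  obtain ⟨p, hp, M', rfl⟩ := Nat.exists_prime_and_dvd hM1
  have hM' : 0 < M' := Nat.pos_of_mul_pos_left hM
  have descend : ∀ {t : Finset ι} {ε' : ι → ℤ} {γ : ι → ℂ}, #t ≤ #s → Odd #t →
      (∀ i ∈ t, Odd (ε' i)) → (∀ i ∈ t, γ i ^ M' = 1) → ∑ i ∈ t, ε' i * γ i = 0 →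
      ∃ q, q.Prime ∧ Odd q ∧ q ∣ p * M' ∧ q ≤ #s := by
    intro t ε' γ hts ht hε' hγ hsum'
    obtain ⟨q, hq, hqo, hqM', hqt⟩ :=
      IH M' (lt_mul_left hM' hp.one_lt) hM' hε' hγ hsum' ht
    exact ⟨q, hq, hqo, dvd_mul_of_dvd_right hqM' p, hqt.trans hts⟩
  have descend_fiber : ∀ (r : ι → ℕ) (γ : ι → ℂ), (∀ i ∈ s, r i < p) →
      (∀ i ∈ s, γ i ^ M' = 1) → (∀ k < p, ∑ i ∈ s with r i = k, ε i * γ i = 0) →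
      ∃ q, q.Prime ∧ Odd q ∧ q ∣ p * M' ∧ q ≤ #s := by
    intro r γ hr hγ hfiber
    obtain ⟨k, hk⟩ := exists_odd_card_filter_eq hs r
    obtain ⟨i, hi⟩ := card_pos.1 hk.pos
    obtain ⟨his, rfl⟩ := mem_filter.1 hi
    exact descend (card_filter_le _ _) hk (fun j hj => hε j (mem_filter.1 hj).1)
      (fun j hj => hγ j (mem_filter.1 hj).1) (hfiber _ (hr i his))
  by_cases hpM' : p ∣ M'
  · obtain ⟨r, γ, hr, hγ, hfiber⟩ := exists_fiberwise_sum_eq_zero_of_dvd hp hM' hpM' hα hsum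
    exact descend_fiber r γ hr hγ hfiber
  by_cases hp2 : p = 2
  · subst hp2
    obtain ⟨ε', γ, hε', hγ, heq⟩ :=
      exists_signed_sum_eq_of_odd (Nat.odd_iff.2 (by omega)) hε hα
    exact descend le_rfl hs hε' hγ (heq.trans hsum)
  obtain ⟨r, γ, hr, hγ, hfiber⟩ := exists_fiberwise_sum_eq_of_coprime hp hpM' hα hsum
  by_cases hT : ∑ i ∈ s with r i = p - 1, ε i * γ i = 0
  · exact descend_fiber r γ hr hγ fun k hk => (hfiber k hk).trans hT
  refine ⟨p, hp, hp.odd_of_ne_two hp2, dvd_mul_right p M', ?_⟩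
  calc p = ∑ _k ∈ range p, 1 := by simp
    _ ≤ ∑ k ∈ range p, #{i ∈ s | r i = k} := sum_le_sum fun k hk =>
        card_pos.2 (nonempty_of_sum_ne_zero ((hfiber k (mem_range.1 hk)).trans_ne hT))
    _ = #s := (card_eq_sum_card_fiberwise fun i hi => mem_range.2 (hr i hi)).symm

namespace IsVanishingWeight

theorem zero (m : ℕ) : IsVanishingWeight m 0 :=
  ⟨Fin.elim0, fun i => i.elim0, by simp⟩

theorem add {m a b : ℕ} (ha : IsVanishingWeight m a) (hb : IsVanishingWeight m b) :
    IsVanishingWeight m (a + b) := by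
  obtain ⟨α, hα, hαsum⟩ := ha
  obtain ⟨β, hβ, hβsum⟩ := hb
  refine ⟨Fin.append α β, Fin.addCases (by simpa using hα) (by simpa using hβ), ?_⟩
  simp [Fin.sum_univ_add, hαsum, hβsum]

theorem of_dvd {m d : ℕ} (hd : d ∣ m) (h1 : 1 < d) : IsVanishingWeight m d := by
  have hζ := Complex.isPrimitiveRoot_exp d (by omega)
  refine ⟨fun i => Complex.exp (2 * Real.pi * Complex.I / d) ^ (i : ℕ), fun i => ?_, ?_⟩
  · obtain ⟨k, rfl⟩ := hd
    rw [← pow_mul, mul_left_comm, pow_mul, hζ.pow_eq_one, one_pow]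
  · rw [Fin.sum_univ_eq_sum_range (fun i => Complex.exp (2 * Real.pi * Complex.I / d) ^ i) d]
    exact hζ.geom_sum_eq_zero h1

theorem of_even {m n : ℕ} (h2 : 2 ∣ m) (hn : Even n) : IsVanishingWeight m n := by
  obtain ⟨k, rfl⟩ := hn
  induction k with
  | zero => exact zero m
  | succ k ih => simpa [add_add_add_comm] using ih.add (of_dvd h2 one_lt_two)

theorem exists_odd_prime_dvd_le {m n : ℕ} (hm : 0 < m) (h : IsVanishingWeight m n)
    (hn : Odd n) : ∃ q, q.Prime ∧ Odd q ∧ q ∣ m ∧ q ≤ n := by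
  obtain ⟨α, hα, hsum⟩ := h
  simpa using exists_odd_prime_dvd_le_card_of_sum_eq_zero hm (s := univ) (ε := 1)
    (fun _ _ => odd_one) (fun i _ => hα i) (by simpa using hsum) (by simpa using hn)

end IsVanishingWeight

/-- Corollary 5.6: for even `m`, `W(m) = 2ℕ` if `m` is a power of `2`; otherwise
`W(m) = {even n} ∪ {n : n ≥ p}` where `p` is the smallest odd prime dividing `m`. -/
theorem weight_set_of_even (m : ℕ) (hm : 0 < m) (h2 : 2 ∣ m) :
    ((∃ k, m = 2 ^ k) → ∀ n, IsVanishingWeight m n ↔ Even n) ∧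
    ((¬ ∃ k, m = 2 ^ k) → ∀ p : ℕ, p.Prime → Odd p → p ∣ m →
      (∀ q : ℕ, q.Prime → Odd q → q ∣ m → p ≤ q) →
      ∀ n, IsVanishingWeight m n ↔ (Even n ∨ p ≤ n)) := by
  refine ⟨fun ⟨k, hk⟩ n => ⟨fun h => ?_, IsVanishingWeight.of_even h2⟩,
    fun _ p hp hpodd hpm hmin n => ⟨fun h => ?_, ?_⟩⟩
  · by_contra hn
    obtain ⟨q, hq, hqodd, hqm, -⟩ :=
      h.exists_odd_prime_dvd_le hm (Nat.not_even_iff_odd.1 hn)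
    rw [hk] at hqm
    obtain rfl := (Nat.prime_dvd_prime_iff_eq hq Nat.prime_two).1 (hq.dvd_of_dvd_pow hqm)
    exact Nat.not_odd_iff_even.2 even_two hqodd
  · refine (Nat.even_or_odd n).imp id fun hn => ?_
    obtain ⟨q, hq, hqodd, hqm, hqn⟩ := h.exists_odd_prime_dvd_le hm hn
    exact (hmin q hq hqodd hqm).trans hqn
  · rintro (hn | hpn)
    · exact .of_even h2 hn
    obtain hn | hn := Nat.even_or_odd n
    · exact .of_even h2 hn
    rw [← Nat.add_sub_cancel' hpn]
    exact (IsVanishingWeight.of_dvd hpm hp.one_lt).add (.of_even h2 (Nat.Odd.sub_odd hn hpodd))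
end

section
/- Let p, q, ℓ be three distinct primes, and let α, β, γ ∈ ℂ be primitive p-th, q-th and ℓ-th roots of unity respectively. Then the sum Σ_{i=1}^{p−1} Σ_{j=1}^{q−1} α^i·β^j + Σ_{k=1}^{ℓ−1} γ^k equals 0, and this vanishing sum is minimal: no proper nonempty sub-multiset of the multiset {α^i β^j : 1 ≤ i ≤ p−1, 1 ≤ j ≤ q−1} ∪ {γ^k : 1 ≤ k ≤ ℓ−1} has sum 0. Its weight is (p−1)(q−1) + (ℓ−1). -/
/-!
The (p-1)(q-1)(ℓ-1) products αⁱβʲγᵏ (1 ≤ i < p, 1 ≤ j < q, 1 ≤ k < ℓ) span ℚ(αβγ), a field of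
degree φ(pqℓ) = (p-1)(q-1)(ℓ-1) over ℚ, so they are linearly independent over ℚ.
Since ∑ αⁱ = ∑ βʲ = ∑ γᵏ = -1, a subsum ∑_{(i,j) ∈ A} αⁱβʲ + ∑_{k ∈ B} γᵏ equals
∑_{i,j,k} ([k ∈ B] - [(i,j) ∈ A]) αⁱβʲγᵏ; it vanishes only if (i,j) ∈ A ↔ k ∈ B for all i, j, k,
that is, only if it is empty or the whole sum.
-/

open Finset Submodule

theorem Multiset.exists_le_map_eq_of_le_map {α β : Type*} {f : α → β} {s : Multiset α}
    {t : Multiset β} (h : t ≤ s.map f) : ∃ u ≤ s, u.map f = t := by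
  induction s using Quotient.inductionOn
  induction t using Quotient.inductionOn
  obtain ⟨l, hperm, hsub⟩ := h
  obtain ⟨l', hl', rfl⟩ := List.sublist_map_iff.mp hsub
  exact ⟨l', hl'.subperm, Quotient.sound hperm⟩

theorem Finset.exists_subset_map_val_eq_of_le {α β : Type*} {f : α → β} {s : Finset α}
    {t : Multiset β} (h : t ≤ s.val.map f) : ∃ A ⊆ s, A.val.map f = t := by
  obtain ⟨u, hu, rfl⟩ := Multiset.exists_le_map_eq_of_le_map h
  exact ⟨⟨u, Multiset.nodup_of_le hu s.nodup⟩, Finset.val_le_iff.mp hu, rfl⟩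

theorem Multiset.exists_le_le_eq_add_of_le_add {α : Type*} {s t u : Multiset α} (h : u ≤ s + t) :
    ∃ s' ≤ s, ∃ t' ≤ t, u = s' + t' := by
  classical
  refine ⟨u ∩ s, Multiset.inter_le_right, u - s, ?_, ?_⟩
  · rwa [Multiset.sub_le_iff_le_add, add_comm]
  · rw [add_comm, Multiset.sub_add_inter]

theorem IsPrimitiveRoot.mul_of_coprime_s12 {M : Type*} [CommMonoid M] {α β : M} {m n : ℕ}
    (hα : IsPrimitiveRoot α m) (hβ : IsPrimitiveRoot β n) (hmn : m.Coprime n) :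
    IsPrimitiveRoot (α * β) (m * n) := by
  rw [hα.eq_orderOf, hβ.eq_orderOf] at hmn ⊢
  rw [← (Commute.all α β).orderOf_mul_eq_mul_orderOf_of_coprime hmn]
  exact IsPrimitiveRoot.orderOf _

theorem IsPrimitiveRoot.sum_pow_Icc_eq_neg_one {R : Type*} [CommRing R] [IsDomain R] {ζ : R}
    {r : ℕ} (hζ : IsPrimitiveRoot ζ r) (hr : 1 < r) :
    ∑ i ∈ Icc 1 (r - 1), ζ ^ i = -1 := by
  have h := hζ.geom_sum_eq_zero hr
  rw [range_eq_Ico, sum_eq_sum_Ico_succ_bot (by omega), pow_zero, zero_add] at h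
  rw [← Ico_add_one_right_eq_Icc, Nat.sub_add_cancel hr.le]
  linear_combination h

theorem IsPrimitiveRoot.pow_mem_span_pow_Icc {R K : Type*} [CommRing R] [IsDomain R] [Ring K]
    [Module K R] {ζ : R} {r : ℕ} (hζ : IsPrimitiveRoot ζ r) (hr : 1 < r) (a : ℕ) :
    ζ ^ a ∈ span K ((ζ ^ ·) '' ↑(Icc 1 (r - 1))) := by
  have hmem : ∀ i ∈ Icc 1 (r - 1), ζ ^ i ∈ span K ((ζ ^ ·) '' ↑(Icc 1 (r - 1))) :=
    fun i hi => subset_span ⟨i, hi, rfl⟩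
  rw [← pow_mod_orderOf, ← hζ.eq_orderOf]
  obtain h0 | hpos := Nat.eq_zero_or_pos (a % r)
  · rw [h0, pow_zero, ← neg_neg (1 : R), ← hζ.sum_pow_Icc_eq_neg_one hr]
    exact neg_mem (sum_mem hmem)
  · exact hmem _ (mem_Icc.mpr ⟨hpos, by have := Nat.mod_lt a (by omega : 0 < r); omega⟩)

theorem IsPrimitiveRoot.linearIndepOn_of_pow_mem_span {L ι : Type*} [Field L] [CharZero L]
    {ζ : L} {n : ℕ} (hζ : IsPrimitiveRoot ζ n) (hn : 0 < n) {v : ι → L} {s : Finset ι}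
    (hcard : #s ≤ n.totient) (hspan : ∀ t, ζ ^ t ∈ span ℚ (v '' s)) :
    LinearIndepOn ℚ v s := by
  have : FiniteDimensional ℚ (span ℚ (v '' s)) :=
    FiniteDimensional.span_of_finite ℚ (s.finite_toSet.image v)
  have hpow : LinearIndependent ℚ
      fun i : Fin (minpoly ℚ ζ).natDegree => (⟨ζ ^ (i : ℕ), hspan i⟩ : span ℚ (v '' s)) :=
    .of_comp (span ℚ (v '' s)).subtype (linearIndependent_pow ζ)
  have hdeg : (minpoly ℚ ζ).natDegree = n.totient := by
    rw [← Polynomial.cyclotomic_eq_minpoly_rat hζ hn, Polynomial.natDegree_cyclotomic]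
  rw [LinearIndepOn, linearIndependent_iff_card_le_finrank_span, ← Set.image_eq_range]
  calc Fintype.card (s : Set ι) = #s := by simp
    _ ≤ (minpoly ℚ ζ).natDegree := hdeg ▸ hcard
    _ = Fintype.card (Fin (minpoly ℚ ζ).natDegree) := (Fintype.card_fin _).symm
    _ ≤ _ := hpow.fintype_card_le_finrank

theorem linearIndepOn_pow_mul_pow_mul_pow {L : Type*} [Field L] [CharZero L] {p q ℓ : ℕ}
    (hp : p.Prime) (hq : q.Prime) (hl : ℓ.Prime) (hpq : p ≠ q) (hpl : p ≠ ℓ) (hql : q ≠ ℓ)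
    {α β γ : L} (hα : IsPrimitiveRoot α p) (hβ : IsPrimitiveRoot β q)
    (hγ : IsPrimitiveRoot γ ℓ) :
    LinearIndepOn ℚ (fun x : (ℕ × ℕ) × ℕ => α ^ x.1.1 * β ^ x.1.2 * γ ^ x.2)
      ↑((Icc 1 (p - 1) ×ˢ Icc 1 (q - 1)) ×ˢ Icc 1 (ℓ - 1)) := by
  have hpq' := (Nat.coprime_primes hp hq).mpr hpq
  have hpl' := (Nat.coprime_primes hp hl).mpr hpl
  have hql' := (Nat.coprime_primes hq hl).mpr hql
  have hζ := (hα.mul_of_coprime_s12 hβ hpq').mul_of_coprime_s12 hγ (hpl'.mul_left hql')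
  refine hζ.linearIndepOn_of_pow_mem_span (by positivity [hp.pos, hq.pos, hl.pos]) ?_ fun t => ?_
  · rw [Nat.totient_mul (hpl'.mul_left hql'), Nat.totient_mul hpq', Nat.totient_prime hp,
      Nat.totient_prime hq, Nat.totient_prime hl]
    simp
  · have h := mul_mem_mul (mul_mem_mul (hα.pow_mem_span_pow_Icc (K := ℚ) hp.one_lt t)
      (hβ.pow_mem_span_pow_Icc hq.one_lt t)) (hγ.pow_mem_span_pow_Icc hl.one_lt t)
    rw [span_mul_span, span_mul_span, ← mul_pow, ← mul_pow] at h
    refine span_mono ?_ h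
    rintro _ ⟨_, ⟨_, ⟨i, hi, rfl⟩, _, ⟨j, hj, rfl⟩, rfl⟩, _, ⟨k, hk, rfl⟩, rfl⟩
    exact ⟨((i, j), k), by simp_all, rfl⟩

theorem eq_empty_or_eq_of_sum_add_sum_eq_zero {K R ι κ : Type*} [Ring K] [Ring R] [Nontrivial R]
    [Module K R] {f : ι → R} {g : κ → R} {E : Finset ι} {F : Finset κ}
    (hli : LinearIndepOn K (fun x : ι × κ => f x.1 * g x.2) ↑(E ×ˢ F))
    (hf : ∑ x ∈ E, f x = 1) (hg : ∑ y ∈ F, g y = -1) {A : Finset ι} {B : Finset κ}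
    (hA : A ⊆ E) (hB : B ⊆ F) (h : ∑ x ∈ A, f x + ∑ y ∈ B, g y = 0) :
    (A = ∅ ∧ B = ∅) ∨ (A = E ∧ B = F) := by
  classical
  have := Module.nontrivial K R
  set c : ι × κ → K := fun x => (if x.2 ∈ B then 1 else 0) - (if x.1 ∈ A then 1 else 0)
  have hc : ∑ x ∈ E ×ˢ F, c x • (f x.1 * g x.2) = ∑ x ∈ A, f x + ∑ y ∈ B, g y := by
    simp only [c, sub_smul, ite_smul, one_smul, zero_smul, sum_sub_distrib, ← sum_filter]
    rw [filter_product_right (· ∈ B), filter_product_left (· ∈ A), filter_mem_eq_inter,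
      filter_mem_eq_inter, inter_eq_right.mpr hA, inter_eq_right.mpr hB, sum_product,
      sum_product, ← sum_mul_sum, ← sum_mul_sum, hf, hg, one_mul, mul_neg_one, sub_neg_eq_add,
      add_comm]
  have hiff : ∀ x ∈ E, ∀ y ∈ F, (x ∈ A ↔ y ∈ B) := fun x hx y hy => by
    have := linearIndepOn_finset_iff.mp hli c (hc.trans h) (x, y) (mem_product.mpr ⟨hx, hy⟩)
    by_cases hxA : x ∈ A <;> by_cases hyB : y ∈ B <;> simp_all [c]
  obtain ⟨x₀, hx₀⟩ : E.Nonempty := nonempty_of_sum_ne_zero (hf ▸ one_ne_zero)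
  obtain ⟨y₀, hy₀⟩ : F.Nonempty := nonempty_of_sum_ne_zero (hg ▸ neg_ne_zero.mpr one_ne_zero)
  by_cases hB₀ : y₀ ∈ B
  · have hA₀ := (hiff x₀ hx₀ y₀ hy₀).2 hB₀
    exact .inr ⟨hA.antisymm fun x hx => (hiff x hx y₀ hy₀).2 hB₀,
      hB.antisymm fun y hy => (hiff x₀ hx₀ y hy).1 hA₀⟩
  · have hA₀ : x₀ ∉ A := mt (hiff x₀ hx₀ y₀ hy₀).1 hB₀
    exact .inl ⟨eq_empty_of_forall_notMem fun x hx => hB₀ ((hiff x (hA hx) y₀ hy₀).1 hx),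
      eq_empty_of_forall_notMem fun y hy => hA₀ ((hiff x₀ hx₀ y (hB hy)).2 hy)⟩

/-- Example 2.5: for distinct primes `p, q, ℓ` and primitive roots of unity
`α, β, γ` of those orders, the sum `∑_{i=1}^{p-1} ∑_{j=1}^{q-1} αⁱβʲ + ∑_{k=1}^{ℓ-1} γᵏ`
vanishes, is minimal, and has weight `(p-1)(q-1) + (ℓ-1)`. -/
theorem redei_sum_minimal
    (p q ℓ : ℕ) (hp : p.Prime) (hq : q.Prime) (hl : ℓ.Prime)
    (hpq : p ≠ q) (hpl : p ≠ ℓ) (hql : q ≠ ℓ)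
    (α β γ : ℂ) (hα : IsPrimitiveRoot α p) (hβ : IsPrimitiveRoot β q)
    (hγ : IsPrimitiveRoot γ ℓ)
    (S : Multiset ℂ)
    (hSdef : S = ((Finset.Icc 1 (p - 1) ×ˢ Finset.Icc 1 (q - 1)).val.map
        fun ij => α ^ ij.1 * β ^ ij.2) +
      ((Finset.Icc 1 (ℓ - 1)).val.map fun k => γ ^ k)) :
    S.sum = 0 ∧
    (∀ T : Multiset ℂ, T ≤ S → T ≠ 0 → T ≠ S → T.sum ≠ 0) ∧
    Multiset.card S = (p - 1) * (q - 1) + (ℓ - 1) := by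
  have hf : ∑ ij ∈ Icc 1 (p - 1) ×ˢ Icc 1 (q - 1), α ^ ij.1 * β ^ ij.2 = 1 := by
    rw [sum_product, ← sum_mul_sum, hα.sum_pow_Icc_eq_neg_one hp.one_lt,
      hβ.sum_pow_Icc_eq_neg_one hq.one_lt, neg_one_mul, neg_neg]
  have hg : ∑ k ∈ Icc 1 (ℓ - 1), γ ^ k = -1 := hγ.sum_pow_Icc_eq_neg_one hl.one_lt
  subst hSdef
  refine ⟨?_, fun T hT hT0 hTS hTsum => ?_, ?_⟩
  · rw [Multiset.sum_add, ← sum_eq_multiset_sum, ← sum_eq_multiset_sum, hf, hg, add_neg_cancel]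
  · obtain ⟨_, hu, _, hv, rfl⟩ := Multiset.exists_le_le_eq_add_of_le_add hT
    obtain ⟨A, hA, rfl⟩ := Finset.exists_subset_map_val_eq_of_le hu
    obtain ⟨B, hB, rfl⟩ := Finset.exists_subset_map_val_eq_of_le hv
    rw [Multiset.sum_add, ← sum_eq_multiset_sum, ← sum_eq_multiset_sum] at hTsum
    obtain ⟨rfl, rfl⟩ | ⟨rfl, rfl⟩ := eq_empty_or_eq_of_sum_add_sum_eq_zero
      (f := fun ij : ℕ × ℕ => α ^ ij.1 * β ^ ij.2) (g := (γ ^ ·))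
      (linearIndepOn_pow_mul_pow_mul_pow hp hq hl hpq hpl hql hα hβ hγ) hf hg hA hB hTsum
    · exact hT0 (by simp)
    · exact hTS rfl
  · simp only [Multiset.card_add, Multiset.card_map, card_val, card_product, Nat.card_Icc,
      add_tsub_cancel_right]
end

section
/- Let F be a field of characteristic 0, G a finite group, and χ the character of a finite-dimensional representation of G over F. Let g ∈ G have order m, and suppose χ(g) = s·1_F for some integer s with s > 0, and that t := χ(1) + s is odd. Then m has an odd prime divisor, and t ≥ ℓ, where ℓ is the smallest odd prime dividing m. -/
/-!
The eigenvalues of `D g` in an algebraic closure are `m`-th roots of unity summing to `s`; with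
`s` copies of `-1` added they form a vanishing sum of `t` roots of unity of order dividing `2m`.
So it suffices that a vanishing sum of `N`-th roots of unity with fewer terms than any odd prime
divisor of `N` has an even number of terms (a special case of Lam–Leung).

Write the terms as powers `w ^ kᵢ` of a primitive `N`-th root and sort them into classes by
`kᵢ mod q` for a prime `q ∣ N`. Applying the Galois conjugations `w ↦ w ^ j` and inverting the
Fourier transform over the `q`-th roots of unity shows that each class, once its `q`-th root of
unity part is divided out, is a vanishing sum of `N/q`-th roots of unity, which is even by
induction. This works when `q² ∣ N`, and when `q` is odd and there are fewer than `q` terms, so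
that some class is empty. If there is no such prime, then `N ∣ 2`, every term is `±1`, and the
count is even.
-/

open Finset Polynomial

theorem Nat.dvd_two_or_exists_prime_mul (n : ℕ) (hn : n ≠ 0) :
    n ∣ 2 ∨ ∃ q e, q.Prime ∧ n = q * e ∧ (q ∣ e ∨ Odd q) := by
  by_cases hodd : ∃ q, q.Prime ∧ Odd q ∧ q ∣ n
  · obtain ⟨q, hq, hqo, e, rfl⟩ := hodd
    exact Or.inr ⟨q, e, hq, rfl, Or.inr hqo⟩
  push Not at hodd
  have two_of_dvd {p : ℕ} (hp : p.Prime) (hpn : p ∣ n) : p = 2 := by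
    by_contra h
    exact hodd p hp (hp.odd_of_ne_two h) hpn
  rcases eq_or_ne n 1 with rfl | hn1
  · exact Or.inl (one_dvd 2)
  obtain ⟨e, rfl⟩ : 2 ∣ n := two_of_dvd (minFac_prime hn1) (minFac_dvd n) ▸ minFac_dvd n
  rcases eq_or_ne e 1 with rfl | he1
  · exact Or.inl dvd_rfl
  refine Or.inr ⟨2, e, prime_two, rfl, Or.inl ?_⟩
  exact two_of_dvd (minFac_prime he1) ((minFac_dvd e).trans (dvd_mul_left e 2)) ▸ minFac_dvd e

section

variable {K ι : Type*} [Field K]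

theorem even_card_of_sum_eq_zero_of_sq_eq_one [CharZero K] {s : Finset ι} {z : ι → K}
    (hz : ∀ i ∈ s, z i ^ 2 = 1) (hsum : ∑ i ∈ s, z i = 0) : Even #s := by
  classical
  have hcard : (#s : K) = 2 * #{i ∈ s | z i = 1} := by
    calc (#s : K) = ∑ i ∈ s, (1 + z i) := by simp [sum_add_distrib, hsum]
      _ = ∑ i ∈ s, if z i = 1 then 2 else 0 := sum_congr rfl fun i hi => by
          rcases mul_self_eq_one_iff.1 ((sq _).symm.trans (hz i hi)) with h | h <;> norm_num [h]
      _ = 2 * #{i ∈ s | z i = 1} := by rw [sum_ite, sum_const, sum_const_zero]; simp [mul_comm]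
  exact ⟨_, by exact_mod_cast hcard.trans (two_mul _)⟩

namespace IsPrimitiveRoot

variable {w : K} {n : ℕ}

theorem sum_range_pow_mul_eq_ite (hw : IsPrimitiveRoot w n) (m : ℕ) :
    ∑ u ∈ range n, w ^ (u * m) = if n ∣ m then (n : K) else 0 := by
  simp_rw [mul_comm _ m, pow_mul]
  split_ifs with h
  · simp [hw.pow_eq_one_iff_dvd m |>.mpr h]
  · rw [geom_sum_eq (by rwa [Ne, hw.pow_eq_one_iff_dvd]), ← pow_mul, mul_comm, pow_mul,
      hw.pow_eq_one, one_pow, sub_self, zero_div]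

theorem mul_sum_filter_mod_eq_sum (hw : IsPrimitiveRoot w n) {s : Finset ι} {c : ι → ℕ}
    {f : ι → K} (h : ∀ u ∈ Ico 1 n, ∑ i ∈ s, w ^ (u * c i) * f i = 0) {r : ℕ} (hr : r < n) :
    (n : K) * ∑ i ∈ s with c i % n = r, f i = ∑ i ∈ s, f i := by
  have hdvd (m : ℕ) : n ∣ n - r + m ↔ m % n = r := by
    rw [← ZMod.natCast_eq_zero_iff]
    push_cast [Nat.cast_sub hr.le]
    rw [ZMod.natCast_self, zero_sub, neg_add_eq_zero, ZMod.natCast_eq_natCast_iff',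
      Nat.mod_eq_of_lt hr, eq_comm]
  calc (n : K) * ∑ i ∈ s with c i % n = r, f i
      = ∑ u ∈ range n, w ^ (u * (n - r)) * ∑ i ∈ s, w ^ (u * c i) * f i := by
        simp_rw [mul_sum, ← mul_assoc, ← pow_add, ← mul_add]
        rw [sum_comm]
        simp_rw [← sum_mul, hw.sum_range_pow_mul_eq_ite, hdvd, ite_mul, zero_mul, sum_ite,
          sum_const_zero, add_zero]
    _ = ∑ i ∈ s, f i := by
        rw [range_eq_Ico, sum_eq_sum_Ico_succ_bot (by omega),
          sum_eq_zero (s := Ico 1 n) fun u hu => by rw [h u hu, mul_zero]]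
        simp

variable [CharZero K]

theorem sum_pow_mul_eq_zero_of_coprime (hw : IsPrimitiveRoot w n) (hn : 0 < n)
    {s : Finset ι} {k : ι → ℕ} (hsum : ∑ i ∈ s, w ^ k i = 0) {j : ℕ} (hj : j.Coprime n) :
    ∑ i ∈ s, w ^ (j * k i) = 0 := by
  set P : ℚ[X] := ∑ i ∈ s, X ^ k i
  have aeval_P (z : K) : aeval z P = ∑ i ∈ s, z ^ k i := by simp [P]
  obtain ⟨Q, hQ⟩ : cyclotomic n ℚ ∣ P := by
    rw [cyclotomic_eq_minpoly_rat hw hn]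
    exact minpoly.dvd ℚ w (by rw [aeval_P, hsum])
  simp_rw [pow_mul]
  rw [← aeval_P, hQ, map_mul, cyclotomic_eq_minpoly_rat (hw.pow_of_coprime j hj) hn,
    minpoly.aeval, zero_mul]

variable {q e : ℕ} {s : Finset ι} {k : ι → ℕ}

theorem sum_filter_mod_eq_zero_of_dvd (hw : IsPrimitiveRoot w (q * e)) (he : 0 < e)
    (hq : q.Prime) (hqe : q ∣ e) (hsum : ∑ i ∈ s, w ^ k i = 0) {r : ℕ} (hr : r < q) :
    ∑ i ∈ s with k i % q = r, (w ^ q) ^ (k i / q) = 0 := by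
  have hn : 0 < q * e := mul_pos hq.pos he
  have hω : IsPrimitiveRoot (w ^ e) q := hw.pow hn (mul_comm q e)
  -- `w ↦ w ^ (1 + e u)` multiplies `w ^ k` by `(w ^ e) ^ (u k)`, a power of a `q`-th root of unity.
  have hrel : ∀ u ∈ Ico 1 q, ∑ i ∈ s, (w ^ e) ^ (u * k i) * w ^ k i = 0 := by
    intro u _
    have hje : (1 + e * u).Coprime e :=
      (Nat.coprime_add_mul_left_left 1 e u).2 (Nat.coprime_one_left e)
    rw [← hw.sum_pow_mul_eq_zero_of_coprime hn hsum ((hje.coprime_dvd_right hqe).mul_right hje)]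
    refine sum_congr rfl fun i _ => ?_
    rw [← pow_mul, ← pow_add]
    congr 1
    ring
  have hA := hω.mul_sum_filter_mod_eq_sum hrel hr
  rw [hsum, mul_eq_zero, Nat.cast_eq_zero] at hA
  have hfactor : ∑ i ∈ s with k i % q = r, w ^ k i
      = w ^ r * ∑ i ∈ s with k i % q = r, (w ^ q) ^ (k i / q) := by
    rw [mul_sum]
    refine sum_congr rfl fun i hi => ?_
    rw [← pow_mul, ← pow_add, ← (mem_filter.1 hi).2, Nat.mod_add_div]
  rw [hfactor, mul_eq_zero] at hA
  exact (hA.resolve_left hq.ne_zero).resolve_left (pow_ne_zero _ (hw.ne_zero hn.ne'))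

theorem exists_sum_filter_mod_eq_zero_of_coprime (hw : IsPrimitiveRoot w (q * e)) (he : 0 < e)
    (hq : q.Prime) (hqe : q.Coprime e) (hsum : ∑ i ∈ s, w ^ k i = 0) (hs : #s < q) :
    ∃ k' : ι → ℕ, ∀ r < q, ∑ i ∈ s with k i % q = r, (w ^ q) ^ k' i = 0 := by
  have hn : 0 < q * e := mul_pos hq.pos he
  -- `c ≡ 1, d ≡ 0 (mod q)` and `c ≡ 0, d ≡ 1 (mod e)`, so `w ^ k = w ^ (c k) * w ^ (d k)` splits
  -- off a `q`-th root of unity, and `w ↦ w ^ (u c + d)` raises just that factor to the power `u`.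
  obtain ⟨c, hcq, hce⟩ := Nat.chineseRemainder hqe 1 0
  obtain ⟨d, hdq, hde⟩ := Nat.chineseRemainder hqe 0 1
  obtain ⟨c', rfl⟩ : e ∣ c := Nat.modEq_zero_iff_dvd.1 hce
  obtain ⟨d', rfl⟩ : q ∣ d := Nat.modEq_zero_iff_dvd.1 hdq
  have hcq' : Nat.Coprime (e * c') q := by
    rw [Nat.Coprime, hcq.gcd_eq, Nat.gcd_one_left]
  have hω : IsPrimitiveRoot (w ^ (e * c')) q := by
    rw [pow_mul]
    exact (hw.pow hn (mul_comm q e)).pow_of_coprime c' (Nat.Coprime.coprime_mul_left hcq')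
  have hrel : ∀ u ∈ Ico 1 q,
      ∑ i ∈ s, (w ^ (e * c')) ^ (u * k i) * (w ^ q) ^ (d' * k i) = 0 := by
    intro u hu
    rw [mem_Ico] at hu
    have hjq : (u * (e * c') + q * d').Coprime q := by
      rw [Nat.Coprime, ((hcq.mul_left u).add hdq).gcd_eq, mul_one, add_zero]
      exact (Nat.coprime_of_lt_prime (by omega) hu.2 hq).symm
    have hje : (u * (e * c') + q * d').Coprime e := by
      rw [Nat.Coprime, ((hce.mul_left u).add hde).gcd_eq, mul_zero, zero_add, Nat.gcd_one_left]
    rw [← hw.sum_pow_mul_eq_zero_of_coprime hn hsum (hjq.mul_right hje)]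
    refine sum_congr rfl fun i _ => ?_
    rw [← pow_mul, ← pow_mul, ← pow_add]
    congr 1
    ring
  -- With fewer than `q` terms some class is empty, so the total, `q` times its sum, vanishes.
  obtain ⟨r₀, hr₀, hr₀s⟩ := exists_mem_notMem_of_card_lt_card (s := s.image (k · % q))
    (t := range q) (by simpa using card_image_le.trans_lt hs)
  have htot : ∑ i ∈ s, (w ^ q) ^ (d' * k i) = 0 := by
    rw [← hω.mul_sum_filter_mod_eq_sum hrel (mem_range.1 hr₀), sum_eq_zero, mul_zero]
    intro i hi
    exact absurd (mem_image_of_mem _ (mem_filter.1 hi).1) ((mem_filter.1 hi).2 ▸ hr₀s)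
  refine ⟨fun i => d' * k i, fun r hr => ?_⟩
  have h := hω.mul_sum_filter_mod_eq_sum hrel hr
  rw [htot, mul_eq_zero, Nat.cast_eq_zero] at h
  exact h.resolve_left hq.ne_zero

theorem exists_sum_filter_mod_eq_zero (hw : IsPrimitiveRoot w (q * e)) (he : 0 < e)
    (hq : q.Prime) (hsum : ∑ i ∈ s, w ^ k i = 0) (h : q ∣ e ∨ #s < q) :
    ∃ k' : ι → ℕ, ∀ r < q, ∑ i ∈ s with k i % q = r, (w ^ q) ^ k' i = 0 := by
  by_cases hqe : q ∣ e
  · exact ⟨_, fun r hr => hw.sum_filter_mod_eq_zero_of_dvd he hq hqe hsum hr⟩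
  · exact hw.exists_sum_filter_mod_eq_zero_of_coprime he hq
      (hq.coprime_iff_not_dvd.2 hqe) hsum (h.resolve_left hqe)

theorem even_card_of_sum_pow_eq_zero (hw : IsPrimitiveRoot w n) (hn : 0 < n)
    (hsum : ∑ i ∈ s, w ^ k i = 0) (hlt : ∀ q, q.Prime → Odd q → q ∣ n → #s < q) :
    Even #s := by
  classical
  induction n using Nat.strong_induction_on generalizing w s k with
  | _ n ih =>
  rcases Nat.dvd_two_or_exists_prime_mul n hn.ne' with h2 | ⟨q, e, hq, rfl, hqe⟩
  · refine even_card_of_sum_eq_zero_of_sq_eq_one (fun i _ => ?_) hsum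
    rw [← pow_mul, mul_comm, pow_mul, (hw.pow_eq_one_iff_dvd 2).2 h2, one_pow]
  have he : 0 < e := Nat.pos_of_mul_pos_left hn
  obtain ⟨k', hk'⟩ := hw.exists_sum_filter_mod_eq_zero he hq hsum
    (hqe.imp_right fun hqo => hlt q hq hqo (dvd_mul_right q e))
  rw [card_eq_sum_card_fiberwise (f := (k · % q)) (t := range q)
    fun i _ => mem_range.2 (Nat.mod_lt _ hq.pos)]
  refine even_sum _ fun r hr => ih e (lt_mul_left he hq.one_lt) (hw.pow hn rfl) he
    (hk' r (mem_range.1 hr)) fun p hp hpo hpe => ?_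
  exact (card_filter_le _ _).trans_lt (hlt p hp hpo (dvd_mul_of_dvd_right hpe q))

end IsPrimitiveRoot

theorem Multiset.exists_odd_prime_dvd_le_card_of_sum_eq_zero [CharZero K] [IsAlgClosed K]
    {n : ℕ} (hn : 0 < n) {S : Multiset K} (hS : ∀ ζ ∈ S, ζ ^ n = 1) (hsum : S.sum = 0)
    (hodd : Odd (card S)) : ∃ q, q.Prime ∧ Odd q ∧ q ∣ n ∧ q ≤ card S := by
  classical
  have : NeZero n := ⟨hn.ne'⟩
  obtain ⟨w, hw⟩ := IsAlgClosed.exists_root (cyclotomic n K) (degree_cyclotomic_pos n K hn).ne'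
  replace hw := isRoot_cyclotomic_iff.1 hw
  choose k hk using fun ζ : S =>
    (hw.eq_pow_of_pow_eq_one (hS ζ Multiset.coe_mem)).imp fun _ => And.right
  by_contra! h
  refine Nat.not_even_iff_odd.2 hodd ?_
  rw [← Multiset.card_coe, ← card_univ]
  refine hw.even_card_of_sum_pow_eq_zero (k := k) hn ?_ fun q hq hqo hqn => ?_
  · simp_rw [hk, ← Multiset.sum_eq_sum_coe, hsum]
  · simpa using h q hq hqo hqn

theorem Matrix.pow_eq_one_of_mem_roots_charpoly {N : Type*} [Fintype N] [DecidableEq N]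
    {B : Matrix N N K} {m : ℕ} (hB : B ^ m = 1) {ζ : K} (hζ : ζ ∈ B.charpoly.roots) :
    ζ ^ m = 1 := by
  cases isEmpty_or_nonempty N
  · simp [charpoly_isEmpty] at hζ
  have := spectrum.pow_mem_pow B m (mem_spectrum_iff_isRoot_charpoly.2 (mem_roots'.1 hζ).2)
  rwa [hB, spectrum.one_eq, Set.mem_singleton_iff] at this

end

theorem Matrix.exists_roots_of_unity_sum_eq_trace {F N : Type*} [Field F] [Fintype N]
    [DecidableEq N] {A : Matrix N N F} {m : ℕ} (hA : A ^ m = 1) :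
    ∃ R : Multiset (AlgebraicClosure F), Multiset.card R = Fintype.card N ∧
      R.sum = algebraMap F _ A.trace ∧ ∀ ζ ∈ R, ζ ^ m = 1 := by
  have hB : (A.map (algebraMap F (AlgebraicClosure F))) ^ m = 1 := by
    rw [← RingHom.mapMatrix_apply, ← map_pow, hA, map_one]
  refine ⟨(A.map (algebraMap F _)).charpoly.roots, ?_, ?_,
    fun ζ hζ => pow_eq_one_of_mem_roots_charpoly hB hζ⟩
  · rw [IsAlgClosed.card_roots_eq_natDegree, charpoly_natDegree_eq_dim]
  · rw [← trace_eq_sum_roots_charpoly, AddMonoidHom.map_trace]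

/-- Theorem 7.1 (second part): let `χ` be the character of a representation
`D : G → GLₙ(F)` of a finite group `G` over a field `F` of characteristic `0`,
and let `g ∈ G` have order `m`. If `χ(g) = s·1_F` for an integer `s > 0` and
`t := χ(1) + s = n + s` is odd, then `m` has an odd prime divisor, and `t ≥ ℓ`
where `ℓ` is the smallest odd prime dividing `m`. -/
theorem character_positive_integer_value
    (F : Type*) [Field F] [CharZero F]
    (G : Type*) [Group G] [Finite G]
    (n : ℕ) (D : G →* Matrix.GeneralLinearGroup (Fin n) F)
    (g : G) (m : ℕ) (hm : orderOf g = m)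
    (s : ℤ) (hs : 0 < s)
    (htr : Matrix.trace ((D g : Matrix.GeneralLinearGroup (Fin n) F) :
        Matrix (Fin n) (Fin n) F) = (s : F))
    (hodd : Odd ((n : ℤ) + s)) :
    ∃ ℓ : ℕ, ℓ.Prime ∧ Odd ℓ ∧ ℓ ∣ m ∧
      (∀ q : ℕ, q.Prime → Odd q → q ∣ m → ℓ ≤ q) ∧
      (ℓ : ℤ) ≤ (n : ℤ) + s := by
  classical
  have hm0 : 0 < m := hm ▸ orderOf_pos g
  have hDm : (D g : Matrix (Fin n) (Fin n) F) ^ m = 1 := by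
    rw [← Units.val_pow_eq_pow_val, ← map_pow, ← hm, pow_orderOf_eq_one, map_one, Units.val_one]
  obtain ⟨R, hRcard, hRsum, hRroots⟩ := Matrix.exists_roots_of_unity_sum_eq_trace hDm
  lift s to ℕ using hs.le
  set V := R + Multiset.replicate s (-1)
  have hVcard : Multiset.card V = n + s := by simp [V, hRcard]
  have hVroots : ∀ ζ ∈ V, ζ ^ (2 * m) = 1 := by
    intro ζ hζ
    rcases Multiset.mem_add.1 hζ with hζ | hζ
    · rw [pow_mul', hRroots ζ hζ, one_pow]
    · rw [Multiset.eq_of_mem_replicate hζ, pow_mul, neg_one_sq, one_pow]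
  have hVsum : V.sum = 0 := by simp [V, hRsum, htr]
  obtain ⟨q, hq, hqo, hq2m, hqV⟩ := V.exists_odd_prime_dvd_le_card_of_sum_eq_zero
    (by positivity) hVroots hVsum (by rw [hVcard]; exact_mod_cast hodd)
  have hqm : q ∣ m := (Nat.coprime_two_right.2 hqo).dvd_of_dvd_mul_left hq2m
  have hex : ∃ ℓ : ℕ, ℓ.Prime ∧ Odd ℓ ∧ ℓ ∣ m := ⟨q, hq, hqo, hqm⟩
  obtain ⟨hℓ, hℓo, hℓm⟩ := Nat.find_spec hex
  refine ⟨Nat.find hex, hℓ, hℓo, hℓm,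
    fun q' hq' hq'o hq'm => Nat.find_min' hex ⟨hq', hq'o, hq'm⟩, ?_⟩
  have := Nat.find_min' hex ⟨hq, hqo, hqm⟩
  omega
end
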